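/- arXiv:1206.3610 — 9 statements merged into one kernel-verified Lean document; each statement's English description precedes it below -/
import Mathlib

section
/- Let m ≥ 2 and let α₀,...,α_{m-1} be nonnegative reals summing to 1 with α_{m-1} > 0. Then the characteristic polynomial p(x) = x^m - α_{m-1} x^{m-1} - ... - α₁ x - α₀ has 1 as a simple root, and every other complex root of p has modulus strictly less than 1. -/
open Polynomial Finset

/-! `1` is a root because the weights sum to `1`, and a simple one because the derivative there is
`m - ∑ i αᵢ ≥ m - (m - 1) > 0`. If `p z = 0` with `1 ≤ ‖z‖`, dividing by `z ^ m` writes `1` as the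
convex combination `∑ αᵢ z⁻¹ ^ (m - i)` of points of the closed unit disc. As `1` is an extreme
point of the disc, every point with positive weight is `1`; the weight `α (m - 1) > 0` gives
`z⁻¹ = 1`. -/

theorem Polynomial.rootMultiplicity_eq_one_of_isRoot {R : Type*} [CommRing R] {p : R[X]} {t : R}
    (hp : p.IsRoot t) (hp' : ¬ (derivative p).IsRoot t) : p.rootMultiplicity t = 1 := by
  have hp0 : p ≠ 0 := by rintro rfl; simp at hp'
  have hpos : 0 < p.rootMultiplicity t := (rootMultiplicity_pos hp0).mpr hp
  have hle : ¬ 1 < p.rootMultiplicity t := fun h ↦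
    hp' ((one_lt_rootMultiplicity_iff_isRoot hp0).mp h).2
  omega

theorem Complex.eq_one_of_norm_le_one_of_one_le_re {w : ℂ} (hw : ‖w‖ ≤ 1) (hre : 1 ≤ w.re) :
    w = 1 := by
  have hre1 : w.re = 1 := le_antisymm ((re_le_norm w).trans hw) hre
  have him : w.im = 0 :=
    abs_re_eq_norm.mp (by rw [hre1, abs_one]; exact le_antisymm (hre1 ▸ re_le_norm w) hw)
  exact Complex.ext (by simpa using hre1) (by simpa using him)

theorem Complex.eq_one_of_sum_mul_eq_one {ι : Type*} {s : Finset ι} {a : ι → ℝ} {w : ι → ℂ}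
    (ha : ∀ i ∈ s, 0 ≤ a i) (hsum : ∑ i ∈ s, a i = 1) (hw : ∀ i ∈ s, ‖w i‖ ≤ 1)
    (h : ∑ i ∈ s, (a i : ℂ) * w i = 1) {j : ι} (hj : j ∈ s) (haj : 0 < a j) : w j = 1 := by
  have hre : ∑ i ∈ s, a i * (w i).re = 1 := by
    simpa [re_sum, re_ofReal_mul] using congrArg re h
  have hgap : ∀ i ∈ s, 0 ≤ a i * (1 - (w i).re) := fun i hi ↦
    mul_nonneg (ha i hi) (by linarith [re_le_norm (w i), hw i hi])
  have hgap0 : ∑ i ∈ s, a i * (1 - (w i).re) = 0 := by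
    simp only [mul_sub, mul_one, sum_sub_distrib, hsum, hre, sub_self]
  have hj0 := (sum_eq_zero_iff_of_nonneg hgap).mp hgap0 j hj
  exact eq_one_of_norm_le_one_of_one_le_re (hw j hj)
    (by linarith [(mul_eq_zero.mp hj0).resolve_left haj.ne'])

noncomputable def recurrencePoly {R : Type*} [CommRing R] (m : ℕ) (α : ℕ → R) : R[X] :=
  X ^ m - ∑ i ∈ range m, C (α i) * X ^ i

section CommRing

variable {R S : Type*} [CommRing R] [CommRing S] (m : ℕ) (α : ℕ → R)

theorem eval_recurrencePoly (x : R) :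
    (recurrencePoly m α).eval x = x ^ m - ∑ i ∈ range m, α i * x ^ i := by
  simp [recurrencePoly, eval_finsetSum]

theorem eval_one_derivative_recurrencePoly :
    (derivative (recurrencePoly m α)).eval 1 = m - ∑ i ∈ range m, α i * i := by
  simp [recurrencePoly, eval_finsetSum, derivative_X_pow]

theorem map_recurrencePoly (f : R →+* S) :
    (recurrencePoly m α).map f = recurrencePoly m (f ∘ α) := by
  simp [recurrencePoly, Polynomial.map_sum]

theorem isRoot_recurrencePoly_iff {x : R} :
    (recurrencePoly m α).IsRoot x ↔ x ^ m = ∑ i ∈ range m, α i * x ^ i := by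
  rw [IsRoot, eval_recurrencePoly, sub_eq_zero]

theorem isRoot_one_recurrencePoly {α : ℕ → R} (hsum : ∑ i ∈ range m, α i = 1) :
    (recurrencePoly m α).IsRoot 1 := by
  rw [isRoot_recurrencePoly_iff]
  simp [hsum]

end CommRing

section Real

variable {m : ℕ} {α : ℕ → ℝ} (hα : ∀ i < m, 0 ≤ α i) (hsum : ∑ i ∈ range m, α i = 1)
include hα hsum

theorem eval_one_derivative_recurrencePoly_pos :
    0 < (derivative (recurrencePoly m α)).eval 1 := by
  have hmean : ∑ i ∈ range m, α i * i ≤ m - 1 :=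
    calc ∑ i ∈ range m, α i * i ≤ ∑ i ∈ range m, α i * (m - 1 : ℝ) := by
          refine sum_le_sum fun i hi ↦ mul_le_mul_of_nonneg_left ?_ (hα i (mem_range.mp hi))
          rw [le_sub_iff_add_le]
          exact_mod_cast mem_range.mp hi
      _ = m - 1 := by rw [← sum_mul, hsum, one_mul]
  rw [eval_one_derivative_recurrencePoly]
  linarith

theorem rootMultiplicity_one_recurrencePoly : (recurrencePoly m α).rootMultiplicity 1 = 1 :=
  rootMultiplicity_eq_one_of_isRoot (isRoot_one_recurrencePoly m hsum)
    (eval_one_derivative_recurrencePoly_pos hα hsum).ne'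

theorem norm_lt_one_of_isRoot_map_recurrencePoly (hlast : 0 < α (m - 1)) {z : ℂ}
    (hz : ((recurrencePoly m α).map (algebraMap ℝ ℂ)).IsRoot z) (hz1 : z ≠ 1) : ‖z‖ < 1 := by
  obtain ⟨k, rfl⟩ := Nat.exists_eq_add_one_of_ne_zero (n := m) (by rintro rfl; simp at hsum)
  rw [Nat.add_sub_cancel] at hlast
  rw [map_recurrencePoly, isRoot_recurrencePoly_iff] at hz
  by_contra! hz_norm
  have hz0 : z ≠ 0 := by rintro rfl; norm_num at hz_norm
  have hcomb : ∑ i ∈ range (k + 1), (α i : ℂ) * (z ^ i / z ^ (k + 1)) = 1 := by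
    simp_rw [mul_div_assoc', ← sum_div]
    exact div_eq_one_iff_eq (pow_ne_zero _ hz0) |>.mpr hz.symm
  have hdisc : ∀ i ∈ range (k + 1), ‖z ^ i / z ^ (k + 1)‖ ≤ 1 := fun i hi ↦ by
    rw [norm_div, norm_pow, norm_pow, div_le_one (by positivity)]
    exact pow_le_pow_right₀ hz_norm (mem_range.mp hi).le
  have hlast_eq := Complex.eq_one_of_sum_mul_eq_one (fun i hi ↦ hα i (mem_range.mp hi)) hsum
    hdisc hcomb (self_mem_range_succ k) hlast
  rw [pow_succ, div_mul_cancel_left₀ (pow_ne_zero k hz0), inv_eq_one] at hlast_eq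
  exact hz1 hlast_eq

end Real

theorem stmt_5_general (m : ℕ) (α : ℕ → ℝ)
    (hα : ∀ i, i < m → 0 ≤ α i) (hsum : ∑ i ∈ Finset.range m, α i = 1)
    (hlast : 0 < α (m - 1))
    (p : Polynomial ℝ)
    (hp : p = X ^ m - ∑ i ∈ Finset.range m, C (α i) * X ^ i) :
    p.IsRoot 1 ∧ p.rootMultiplicity 1 = 1 ∧
      (∀ z : ℂ, (p.map (algebraMap ℝ ℂ)).IsRoot z → z ≠ 1 → ‖z‖ < 1) := by
  obtain rfl : p = recurrencePoly m α := hp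
  exact ⟨isRoot_one_recurrencePoly m hsum, rootMultiplicity_one_recurrencePoly hα hsum,
    fun z ↦ norm_lt_one_of_isRoot_map_recurrencePoly hα hsum hlast⟩

theorem stmt_5 (m : ℕ) (hm : 2 ≤ m) (α : ℕ → ℝ)
    (hα : ∀ i, i < m → 0 ≤ α i) (hsum : ∑ i ∈ Finset.range m, α i = 1)
    (hlast : 0 < α (m - 1))
    (p : Polynomial ℝ)
    (hp : p = X ^ m - ∑ i ∈ Finset.range m, C (α i) * X ^ i) :
    p.IsRoot 1 ∧ p.rootMultiplicity 1 = 1 ∧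
      (∀ z : ℂ, (p.map (algebraMap ℝ ℂ)).IsRoot z → z ≠ 1 → ‖z‖ < 1) :=
  stmt_5_general m α hα hsum hlast p hp
end

section
/- Let (y_n) be the real sequence satisfying y_n = α_{m-1} y_{n-1} + ... + α₀ y_{n-m} for n ≥ m, where the α_i are nonnegative, sum to 1, and the characteristic polynomial x^m - ∑ αᵢ xⁱ has 1 as a simple root with all other complex roots of modulus < 1. Then y_n converges to (∑_{k=0}^{m-1} a_k y_k)/(∑_{k=0}^{m-1} a_k), where a_k = ∑_{i=0}^k αᵢ. -/
/-!
Put `a_k = α_0 + ⋯ + α_k` and `q = ∑_{k<m} a_k X^k`. Summation by parts gives `p = (X - 1) q`, so if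
`S` is the shift of sequences then `p(S) y = 0` says that `q(S) y`, i.e. `n ↦ ∑ a_k y_{n+k}`, is a
constant `c`. Since the `α_i` are nonnegative, `q(1) = ∑ a_k ≥ a_{m-1} = 1`, so the roots of `q` are
roots of `p` other than `1` and lie in the open unit disc. Then `e = y - c / q(1)` satisfies
`q(S) e = 0`. Factoring `q` into linear factors `X - r` over `ℂ`, it suffices that for `|r| < 1`,
`e_{n+1} - r e_n → 0` forces `e_n → 0`, which is a contraction estimate.
-/

open Polynomial Filter Finset Topology

section SeqShift

variable (R M : Type*) [CommSemiring R] [AddCommMonoid M] [Module R M]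

def seqShift : Module.End R (ℕ → M) := LinearMap.funLeft R M Nat.succ

variable {R M}

@[simp]
theorem seqShift_apply (e : ℕ → M) (n : ℕ) : seqShift R M e n = e (n + 1) := rfl

@[simp]
theorem seqShift_pow_apply (k : ℕ) (e : ℕ → M) (n : ℕ) : (seqShift R M ^ k) e n = e (n + k) := by
  induction k generalizing e n with
  | zero => rfl
  | succ k ih => rw [pow_succ, Module.End.mul_apply, ih, seqShift_apply, add_assoc]

theorem aeval_seqShift_sum_apply {ι : Type*} (s : Finset ι) (c : ι → R) (d : ι → ℕ) (e : ℕ → M)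
    (n : ℕ) : aeval (seqShift R M) (∑ k ∈ s, C (c k) * X ^ d k) e n = ∑ k ∈ s, c k • e (n + d k) := by
  simp [map_sum, Finset.sum_apply, Module.algebraMap_end_apply]

end SeqShift

section SeqShiftRing

variable {R M : Type*} [CommRing R] [AddCommGroup M] [Module R M]

theorem aeval_seqShift_const (p : R[X]) (x : M) :
    aeval (seqShift R M) p (fun _ => x) = p.eval 1 • fun _ => x :=
  Module.End.aeval_apply_of_mem_apply_eq_smul (by ext; simp)

theorem aeval_seqShift_X_pow_sub_sum_apply (α : ℕ → R) (m : ℕ) (e : ℕ → M) (n : ℕ) :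
    aeval (seqShift R M) (X ^ m - ∑ i ∈ range m, C (α i) * X ^ i) e n
      = e (n + m) - ∑ i ∈ range m, α i • e (n + i) := by
  rw [map_sub, LinearMap.sub_apply, Pi.sub_apply, aeval_seqShift_sum_apply, map_pow, aeval_X,
    seqShift_pow_apply]

theorem X_sub_one_mul_sum_partialSum (α : ℕ → R) (m : ℕ) :
    (X - 1) * ∑ k ∈ range m, C (∑ i ∈ range (k + 1), α i) * X ^ k
      = C (∑ i ∈ range m, α i) * X ^ m - ∑ i ∈ range m, C (α i) * X ^ i := by
  induction m with
  | zero => simp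
  | succ m ih =>
    rw [sum_range_succ _ m, mul_add, ih]
    simp only [sum_range_succ (fun i => α i), sum_range_succ (fun i => C (α i) * X ^ i), map_add]
    ring

end SeqShiftRing

theorem one_le_sum_partialSum {R : Type*} [Semiring R] [PartialOrder R] [IsOrderedRing R]
    [Nontrivial R] {α : ℕ → R} {m : ℕ} (hα : ∀ i < m, 0 ≤ α i) (hsum : ∑ i ∈ range m, α i = 1) :
    1 ≤ ∑ k ∈ range m, ∑ i ∈ range (k + 1), α i := by
  obtain _ | n := m
  · simp at hsum
  rw [sum_range_succ, hsum]
  exact le_add_of_nonneg_left <|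
    sum_nonneg fun k hk => sum_nonneg fun i hi => hα i (by simp at hk hi; omega)

theorem tendsto_zero_of_succ_le_mul_add {u δ : ℕ → ℝ} {q : ℝ} (hq₀ : 0 ≤ q) (hq₁ : q < 1)
    (hu : ∀ n, 0 ≤ u n) (hδ : Tendsto δ atTop (𝓝 0)) (h : ∀ n, u (n + 1) ≤ q * u n + δ n) :
    Tendsto u atTop (𝓝 0) := by
  refine tendsto_order.2 ⟨fun b hb => .of_forall fun n => hb.trans_le (hu n), fun ε hε => ?_⟩
  obtain ⟨N, hN⟩ := eventually_atTop.1 <|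
    (tendsto_order.1 hδ).2 (ε * (1 - q) / 2) (by have := sub_pos.2 hq₁; positivity)
  -- `ε / 2` is the fixed point of `t ↦ q * t + ε * (1 - q) / 2`
  have hbound : ∀ n, N ≤ n → u n ≤ q ^ (n - N) * u N + ε / 2 := by
    intro n hn
    induction n, hn using Nat.le_induction with
    | base => rw [Nat.sub_self, pow_zero, one_mul]; linarith
    | succ n hn ih =>
      rw [Nat.sub_add_comm hn, pow_succ]
      nlinarith [h n, (hN n hn).le, mul_le_mul_of_nonneg_left ih hq₀]
  have hgeom : Tendsto (fun n => q ^ (n - N) * u N) atTop (𝓝 0) := by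
    simpa using ((tendsto_pow_atTop_nhds_zero_of_lt_one hq₀ hq₁).comp
      (tendsto_sub_atTop_nat N)).mul_const (u N)
  filter_upwards [eventually_ge_atTop N, (tendsto_order.1 hgeom).2 (ε / 2) (by positivity)]
    with n hn hlt
  linarith [hbound n hn]

section Normed

variable {𝕜 E : Type*} [NormedField 𝕜] [SeminormedAddCommGroup E] [NormedSpace 𝕜 E]

theorem tendsto_zero_of_tendsto_succ_sub_smul {r : 𝕜} (hr : ‖r‖ < 1) {e : ℕ → E}
    (he : Tendsto (fun n => e (n + 1) - r • e n) atTop (𝓝 0)) :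
    Tendsto e atTop (𝓝 0) := by
  rw [tendsto_zero_iff_norm_tendsto_zero] at he ⊢
  refine tendsto_zero_of_succ_le_mul_add (norm_nonneg r) hr (fun n => norm_nonneg _) he
    fun n => ?_
  rw [← norm_smul]
  exact norm_le_norm_add_norm_sub' _ _

theorem tendsto_zero_of_tendsto_aeval_seqShift_prod {s : Multiset 𝕜} (hs : ∀ r ∈ s, ‖r‖ < 1)
    {e : ℕ → E} (he : Tendsto (aeval (seqShift 𝕜 E) (s.map (X - C ·)).prod e) atTop (𝓝 0)) :
    Tendsto e atTop (𝓝 0) := by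
  induction s using Multiset.induction_on generalizing e with
  | empty => simpa using he
  | cons r s ih =>
    rw [Multiset.forall_mem_cons] at hs
    refine tendsto_zero_of_tendsto_succ_sub_smul hs.1 (ih hs.2 ?_)
    have hfactor : (fun n => e (n + 1) - r • e n) = aeval (seqShift 𝕜 E) (X - C r) e := by
      ext n
      simp [Module.algebraMap_end_apply]
    rw [Multiset.map_cons, Multiset.prod_cons, mul_comm, map_mul, Module.End.mul_apply] at he
    rwa [hfactor]

variable [IsAlgClosed 𝕜]

theorem tendsto_zero_of_aeval_seqShift_eq_zero {p : 𝕜[X]} (hp : p ≠ 0)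
    (hroots : ∀ r ∈ p.roots, ‖r‖ < 1) {e : ℕ → E} (he : aeval (seqShift 𝕜 E) p e = 0) :
    Tendsto e atTop (𝓝 0) := by
  refine tendsto_zero_of_tendsto_aeval_seqShift_prod hroots ?_
  rw [(IsAlgClosed.splits p).eq_prod_roots, map_mul, aeval_C, Module.End.mul_apply,
    Module.algebraMap_end_apply, smul_eq_zero_iff_right (leadingCoeff_ne_zero.2 hp)] at he
  rw [he]
  exact tendsto_const_nhds

theorem tendsto_of_aeval_seqShift_X_sub_one_mul_eq_zero {q : 𝕜[X]} (hq : q.eval 1 ≠ 0)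
    (hroots : ∀ r ∈ q.roots, ‖r‖ < 1) {z : ℕ → E}
    (hz : aeval (seqShift 𝕜 E) ((X - 1) * q) z = 0) :
    Tendsto z atTop (𝓝 ((q.eval 1)⁻¹ • aeval (seqShift 𝕜 E) q z 0)) := by
  set c := aeval (seqShift 𝕜 E) q z 0
  set L := (q.eval 1)⁻¹ • c
  have hconst : aeval (seqShift 𝕜 E) q z = fun _ => c := by
    rw [map_mul, Module.End.mul_apply] at hz
    funext n
    induction n with
    | zero => rfl
    | succ n ih =>
      rw [← ih]
      simpa [sub_eq_zero, Module.algebraMap_end_apply] using congrFun hz n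
  have hL : aeval (seqShift 𝕜 E) q (fun _ => L) = fun _ => c := by
    rw [aeval_seqShift_const]
    ext
    simp [L, smul_smul, hq]
  have he : Tendsto (z - fun _ => L) atTop (𝓝 0) :=
    tendsto_zero_of_aeval_seqShift_eq_zero (fun h => hq (by simp [h])) hroots
      (by rw [map_sub, hconst, hL, sub_self])
  simpa using he.add_const L

end Normed

theorem stmt_7_general (m : ℕ) (α : ℕ → ℝ)
    (hα : ∀ i, i < m → 0 ≤ α i) (hsum : ∑ i ∈ Finset.range m, α i = 1)
    (hmod : ∀ z : ℂ,
      ((X ^ m - ∑ i ∈ Finset.range m, C (α i) * X ^ i : Polynomial ℝ).map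
        (algebraMap ℝ ℂ)).IsRoot z → z ≠ 1 → ‖z‖ < 1)
    (y : ℕ → ℝ)
    (hrec : ∀ n, m ≤ n → y n = ∑ i ∈ Finset.range m, α i * y (n - m + i))
    (a : ℕ → ℝ) (ha : ∀ k, a k = ∑ i ∈ Finset.range (k + 1), α i) :
    Tendsto y atTop
      (nhds ((∑ k ∈ Finset.range m, a k * y k) / (∑ k ∈ Finset.range m, a k))) := by
  set q : ℝ[X] := ∑ k ∈ range m, C (a k) * X ^ k
  have hfactor : (X - 1) * q = X ^ m - ∑ i ∈ range m, C (α i) * X ^ i := by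
    simp only [q, ha, X_sub_one_mul_sum_partialSum, hsum, C_1, one_mul]
  have hq₀ : q.eval 1 ≠ 0 := by
    have hA := one_le_sum_partialSum hα hsum
    simp only [← ha] at hA
    simpa [q, eval_finsetSum] using (zero_lt_one.trans_le hA).ne'
  set qℂ := q.map (algebraMap ℝ ℂ)
  have hqℂ : qℂ.eval 1 ≠ 0 := by rw [eval_one_map]; exact (_root_.map_ne_zero _).2 hq₀
  have hroots : ∀ r ∈ qℂ.roots, ‖r‖ < 1 := by
    intro r hr
    have hr := isRoot_of_mem_roots hr
    refine hmod r ?_ (by rintro rfl; exact hqℂ hr)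
    rw [← hfactor, Polynomial.map_mul]
    exact hr.dvd (dvd_mul_left _ _)
  have hz : aeval (seqShift ℂ ℂ) ((X - 1) * qℂ) (fun n => (y n : ℂ)) = 0 := by
    have hfactorℂ : (X - 1 : ℂ[X]) * qℂ = X ^ m - ∑ i ∈ range m, C (α i : ℂ) * X ^ i := by
      simpa [qℂ, Polynomial.map_sub, Polynomial.map_sum] using
        congrArg (Polynomial.map (algebraMap ℝ ℂ)) hfactor
    ext n
    rw [hfactorℂ, aeval_seqShift_X_pow_sub_sum_apply, hrec (n + m) (by omega), Nat.add_sub_cancel]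
    simp
  rw [← tendsto_ofReal_iff]
  convert tendsto_of_aeval_seqShift_X_sub_one_mul_eq_zero hqℂ hroots hz using 2
  simp [qℂ, q, Polynomial.map_sum, eval_finsetSum, div_eq_inv_mul]

theorem stmt_7 (m : ℕ) (hm : 2 ≤ m) (α : ℕ → ℝ)
    (hα : ∀ i, i < m → 0 ≤ α i) (hsum : ∑ i ∈ Finset.range m, α i = 1)
    (hsimple : (X ^ m - ∑ i ∈ Finset.range m, C (α i) * X ^ i : Polynomial ℝ).rootMultiplicity 1 = 1)
    (hmod : ∀ z : ℂ,
      ((X ^ m - ∑ i ∈ Finset.range m, C (α i) * X ^ i : Polynomial ℝ).map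
        (algebraMap ℝ ℂ)).IsRoot z → z ≠ 1 → ‖z‖ < 1)
    (y : ℕ → ℝ)
    (hrec : ∀ n, m ≤ n → y n = ∑ i ∈ Finset.range m, α i * y (n - m + i))
    (a : ℕ → ℝ) (ha : ∀ k, a k = ∑ i ∈ Finset.range (k + 1), α i) :
    Tendsto y atTop
      (nhds ((∑ k ∈ Finset.range m, a k * y k) / (∑ k ∈ Finset.range m, a k))) :=
  stmt_7_general m α hα hsum hmod y hrec a ha
end

section
/- Let (y_n) be a sequence in a real Banach space Y satisfying y_n = α_{m-1} y_{n-1} + ... + α₀ y_{n-m} for n ≥ m, with α_i nonnegative summing to 1, and assume the scalar recursion η_n = ∑ αᵢ η_{n-m+i} converges for every choice of real initial data (e.g., under the condition that 1 is a simple root of x^m - ∑ αᵢ xⁱ and all other roots have modulus < 1). Then y_n converges in norm to ∑_{k=0}^{m-1} λ_k y_k, where λ_k = a_k / ∑_{j=0}^{m-1} a_j and a_k = ∑_{i=0}^k αᵢ. -/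
open Filter

private def cseq (m : ℕ) (α : ℕ → ℝ) (k : ℕ) : ℕ → ℝ
  | n =>
    if _h : n < m then (if n = k then 1 else 0)
    else ∑ i ∈ (Finset.range m).attach, α i * cseq m α k (n - m + (i : ℕ))
  termination_by n => n
  decreasing_by
    have hi : (i : ℕ) < m := Finset.mem_range.mp i.2
    omega

private lemma cseq_lt {m : ℕ} {α : ℕ → ℝ} {k n : ℕ} (h : n < m) :
    cseq m α k n = if n = k then 1 else 0 := by
  rw [cseq, dif_pos h]

private lemma cseq_rec {m : ℕ} {α : ℕ → ℝ} {k : ℕ} (n : ℕ) (h : m ≤ n) :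
    cseq m α k n = ∑ i ∈ Finset.range m, α i * cseq m α k (n - m + i) := by
  rw [cseq, dif_neg (by omega)]
  exact Finset.sum_attach (Finset.range m) (fun i => α i * cseq m α k (n - m + i))

theorem stmt_9 (Y : Type*) [NormedAddCommGroup Y] [NormedSpace ℝ Y] [CompleteSpace Y]
    (m : ℕ) (hm : 2 ≤ m) (α : ℕ → ℝ)
    (hα : ∀ i, i < m → 0 ≤ α i) (hsum : ∑ i ∈ Finset.range m, α i = 1)
    (hscalar : ∀ η : ℕ → ℝ,
      (∀ n, m ≤ n → η n = ∑ i ∈ Finset.range m, α i * η (n - m + i)) →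
      ∃ L : ℝ, Tendsto η atTop (nhds L))
    (y : ℕ → Y)
    (hrec : ∀ n, m ≤ n → y n = ∑ i ∈ Finset.range m, α i • y (n - m + i))
    (a : ℕ → ℝ) (ha : ∀ k, a k = ∑ i ∈ Finset.range (k + 1), α i)
    (lam : ℕ → ℝ) (hlam : ∀ k, lam k = a k / ∑ j ∈ Finset.range m, a j) :
    Tendsto y atTop (nhds (∑ k ∈ Finset.range m, lam k • y k)) := by
  obtain ⟨p, rfl⟩ : ∃ p, m = p + 1 := ⟨m - 1, by omega⟩
  set m := p + 1 with hmdef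
  -- Step 1: representation of y n via coefficient sequences
  have hyrep : ∀ n, y n = ∑ k ∈ Finset.range m, cseq m α k n • y k := by
    intro n
    induction n using Nat.strong_induction_on with
    | _ n ih =>
      by_cases h : n < m
      · have hc : ∀ k, cseq m α k n = if n = k then (1:ℝ) else 0 := fun k => cseq_lt h
        simp only [hc, ite_smul, one_smul, zero_smul, Finset.sum_ite_eq,
          Finset.mem_range, if_pos h]
      · push_neg at h
        rw [hrec n h]
        calc ∑ i ∈ Finset.range m, α i • y (n - m + i)
            = ∑ i ∈ Finset.range m, ∑ k ∈ Finset.range m,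
                (α i * cseq m α k (n - m + i)) • y k := by
              refine Finset.sum_congr rfl fun i hi => ?_
              have hi' := Finset.mem_range.mp hi
              rw [ih (n - m + i) (by omega), Finset.smul_sum]
              simp [smul_smul]
          _ = ∑ k ∈ Finset.range m, (∑ i ∈ Finset.range m,
                α i * cseq m α k (n - m + i)) • y k := by
              rw [Finset.sum_comm]
              simp [Finset.sum_smul]
          _ = ∑ k ∈ Finset.range m, cseq m α k n • y k := by
              refine Finset.sum_congr rfl fun k _ => ?_
              rw [cseq_rec n h]
  -- Step 2: each coefficient sequence converges
  have hconv : ∀ k, ∃ L, Tendsto (cseq m α k) atTop (nhds L) :=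
    fun k => hscalar _ (fun n hn => cseq_rec n hn)
  choose L hL using hconv
  set ℓ : Y := ∑ k ∈ Finset.range m, L k • y k with hldef
  have hy : Tendsto y atTop (nhds ℓ) := by
    have h1 : Tendsto (fun n => ∑ k ∈ Finset.range m, cseq m α k n • y k)
        atTop (nhds ℓ) :=
      tendsto_finset_sum _ fun k _ => (hL k).smul_const (y k)
    exact h1.congr fun n => (hyrep n).symm
  -- Step 3: the invariant functional
  have ha0 : a 0 = α 0 := by rw [ha]; simp
  have hastep : ∀ k, a (k + 1) = a k + α (k + 1) := fun k => by
    rw [ha, ha, Finset.sum_range_succ]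
  have hap : a p = 1 := by rw [ha]; exact hsum
  have hTstep : ∀ n, ∑ k ∈ Finset.range m, a k • y (n + 1 + k)
      = ∑ k ∈ Finset.range m, a k • y (n + k) := by
    intro n
    rw [Finset.sum_range_succ (fun k => a k • y (n + 1 + k))]
    have hyn : y (n + 1 + p) = ∑ i ∈ Finset.range m, α i • y (n + i) := by
      rw [hrec (n + 1 + p) (by omega)]
      refine Finset.sum_congr rfl fun i hi => ?_
      have hi' := Finset.mem_range.mp hi
      have e : n + 1 + p - m + i = n + i := by omega
      rw [e]
    rw [hap, one_smul, hyn]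
    rw [Finset.sum_range_succ' (fun i => α i • y (n + i))]
    rw [Finset.sum_range_succ' (fun k => a k • y (n + k))]
    simp only [hastep, add_smul, Finset.sum_add_distrib, ha0, Nat.add_zero]
    have e1 : ∀ k, n + 1 + k = n + (k + 1) := fun k => by omega
    simp only [e1]
    abel
  have hTconst : ∀ n, ∑ k ∈ Finset.range m, a k • y (n + k)
      = ∑ k ∈ Finset.range m, a k • y k := by
    intro n
    induction n with
    | zero => simp
    | succ n ih => exact (hTstep n).trans ih
  have hTlim : Tendsto (fun n => ∑ k ∈ Finset.range m, a k • y (n + k))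
      atTop (nhds (∑ k ∈ Finset.range m, a k • ℓ)) :=
    tendsto_finset_sum _ fun k _ =>
      ((hy.comp (tendsto_add_atTop_nat k)).const_smul (a k))
  set S : ℝ := ∑ j ∈ Finset.range m, a j with hSdef
  have hanonneg : ∀ j, j < m → 0 ≤ a j := fun j hj => by
    rw [ha]
    exact Finset.sum_nonneg fun i hi => hα i (by have := Finset.mem_range.mp hi; omega)
  have hSpos : (0:ℝ) < S := by
    have h1 : (1:ℝ) ≤ S := by
      rw [← hap]
      exact Finset.single_le_sum (fun j hj => hanonneg j (Finset.mem_range.mp hj))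
        (Finset.mem_range.mpr (by omega))
    linarith
  have heq : S • ℓ = ∑ k ∈ Finset.range m, a k • y k := by
    have h1 : Tendsto (fun n => ∑ k ∈ Finset.range m, a k • y (n + k))
        atTop (nhds (∑ k ∈ Finset.range m, a k • y k)) := by
      simp only [hTconst]
      exact tendsto_const_nhds
    have h2 := tendsto_nhds_unique hTlim h1
    rw [hSdef, Finset.sum_smul]
    exact h2
  have hfinal : ∑ k ∈ Finset.range m, lam k • y k = ℓ := by
    calc ∑ k ∈ Finset.range m, lam k • y k
        = S⁻¹ • ∑ k ∈ Finset.range m, a k • y k := by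
          rw [Finset.smul_sum]
          refine Finset.sum_congr rfl fun k _ => ?_
          rw [hlam, smul_smul, div_eq_inv_mul]
      _ = S⁻¹ • (S • ℓ) := by rw [heq]
      _ = ℓ := by rw [smul_smul, inv_mul_cancel₀ (ne_of_gt hSpos), one_smul]
  rw [hfinal]
  exact hy
end

section
/- With T_k = R^k A L^{k-1} as above, for every k ∈ {1,...,m} the partial product satisfies T_k T_{k-1} ··· T_1 = R^k A^k; in particular the full Gauss–Seidel product T = T_m ··· T_1 equals A^m. -/
/-!
Write `shiftMatrix g` for the permutation matrix of the translation `i ↦ i - g` of `ℤ/m`, so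
that `R = shiftMatrix 1`, `L = shiftMatrix (-1)`, `L * R = 1` and `R ^ m = 1`. Reading off entries,
`T_k = R^k A L^(k-1)`: conjugating `A` by `R^(k-1)` moves its last row to row `k - 1` and its
superdiagonal onto the diagonal, and the remaining factor `R` shifts by one more row. The partial
products then telescope, `T_k ⋯ T_1 = R^k A L^(k-1) R^(k-1) A^(k-1) = R^k A^k`, and `R^m = 1`
gives `T_m ⋯ T_1 = A^m`.
-/

namespace Matrix

variable {G β : Type*} [AddCommGroup G] [DecidableEq G] [Semiring β]

def shiftMatrix (g : G) : Matrix G G β := (Equiv.subRight g).toPEquiv.toMatrix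

theorem shiftMatrix_apply (g i j : G) :
    (shiftMatrix g : Matrix G G β) i j = if j = i - g then 1 else 0 := by
  simp [shiftMatrix, eq_comm]

@[simp]
theorem shiftMatrix_zero : (shiftMatrix 0 : Matrix G G β) = 1 := by
  ext i j
  simp [shiftMatrix_apply, one_apply, eq_comm]

variable [Fintype G]

theorem shiftMatrix_mul_apply {n : Type*} (g : G) (M : Matrix G n β) (i : G) (j : n) :
    ((shiftMatrix g : Matrix G G β) * M) i j = M (i - g) j := by
  rw [shiftMatrix, PEquiv.toMatrix_toPEquiv_mul]
  rfl

theorem mul_shiftMatrix_apply {n : Type*} (M : Matrix n G β) (g : G) (i : n) (j : G) :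
    (M * (shiftMatrix g : Matrix G G β)) i j = M i (j + g) := by
  rw [shiftMatrix, PEquiv.mul_toMatrix_toPEquiv]
  simp

theorem shiftMatrix_add (g h : G) :
    (shiftMatrix (g + h) : Matrix G G β) = shiftMatrix g * shiftMatrix h := by
  ext i j
  rw [shiftMatrix_mul_apply, shiftMatrix_apply, shiftMatrix_apply, sub_sub]

theorem shiftMatrix_pow (g : G) (k : ℕ) :
    (shiftMatrix g : Matrix G G β) ^ k = shiftMatrix (k • g) := by
  induction k with
  | zero => simp
  | succ k ih => rw [pow_succ, ih, succ_nsmul, shiftMatrix_add]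

end Matrix

open Matrix

theorem List.prod_map_range_sub_eq_pow_mul_pow {M : Type*} [Monoid M] {a l r : M}
    (hlr : l * r = 1) {n : ℕ} {T : ℕ → M}
    (hT : ∀ k, 1 ≤ k → k ≤ n → T k = r ^ k * a * l ^ (k - 1)) {k : ℕ} (hk : k ≤ n) :
    ((List.range k).map fun j => T (k - j)).prod = r ^ k * a ^ k := by
  induction k with
  | zero => simp
  | succ k ih =>
    have hshift : (fun j => T (k + 1 - j)) ∘ Nat.succ = fun j => T (k - j) := by
      funext j
      simp [Nat.succ_sub_succ]
    rw [List.range_succ_eq_map, List.map_cons, List.map_map, hshift, List.prod_cons,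
      ih (by omega), Nat.sub_zero, hT (k + 1) (by omega) hk, Nat.add_sub_cancel]
    calc r ^ (k + 1) * a * l ^ k * (r ^ k * a ^ k)
        = r ^ (k + 1) * a * (l ^ k * r ^ k) * a ^ k := by simp only [mul_assoc]
      _ = r ^ (k + 1) * a ^ (k + 1) := by
        rw [pow_mul_pow_eq_one k hlr, mul_one, mul_assoc, ← pow_succ']

namespace Fin

theorem val_sub_eq_ite {m : ℕ} (a b : Fin m) :
    (a - b).val = if a.val < b.val then m + a.val - b.val else a.val - b.val := by
  split_ifs with h
  · exact coe_sub_iff_lt.2 h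
  · exact coe_sub_iff_le.2 (not_lt.1 h)

variable {m : ℕ} [NeZero m]

theorem val_eq_val_add_one_mod_iff (a b : Fin m) : a.val = (b.val + 1) % m ↔ a = b + 1 := by
  rw [Fin.ext_iff, Fin.val_add, Fin.val_one', Nat.add_mod_mod]

theorem val_nsmul_one (k : ℕ) : (k • (1 : Fin m)).val = k % m := by
  induction k with
  | zero => simp
  | succ k ih => rw [succ_nsmul, val_add, ih, val_one', Nat.add_mod_mod, Nat.mod_add_mod]

end Fin

theorem Matrix.eq_shiftMatrix_mul_mul_shiftMatrix {β : Type*} [Semiring β] {m : ℕ} [NeZero m]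
    (α : ℕ → β) (A : Matrix (Fin m) (Fin m) β)
    (hA : ∀ i j : Fin m, A i j =
      if (i : ℕ) < m - 1 then (if (j : ℕ) = (i : ℕ) + 1 then 1 else 0) else α j)
    {k : ℕ} (hk1 : 1 ≤ k) (hkm : k ≤ m) (Tk : Matrix (Fin m) (Fin m) β)
    (hTk : ∀ i j : Fin m, Tk i j =
      if (i : ℕ) = k - 1 then
        (if (j : ℕ) < k - 1 then α (m - (k - 1) + (j : ℕ)) else α ((j : ℕ) - (k - 1)))
      else (if i = j then 1 else 0)) :
    Tk = shiftMatrix (k • 1) * A * shiftMatrix ((k - 1) • (-1)) := by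
  ext i j
  rw [mul_shiftMatrix_apply, shiftMatrix_mul_apply, hA, hTk, smul_neg, ← sub_eq_add_neg]
  have hk : k % m = k ∨ k % m = 0 ∧ k = m := by
    rcases hkm.lt_or_eq with h | h
    · exact .inl (Nat.mod_eq_of_lt h)
    · exact .inr ⟨h ▸ Nat.mod_self m, h⟩
  have := i.isLt
  have := j.isLt
  simp only [Fin.val_sub_eq_ite, Fin.val_nsmul_one, Nat.mod_eq_of_lt (show k - 1 < m by omega),
    Fin.ext_iff]
  -- Row `i - k` of `A` is its last row exactly when `i = k - 1`; any other row has its single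
  -- `1` in column `i - k + 1`, which is column `j - (k - 1)` exactly when `j = i`.
  rcases hk with hk | ⟨hk, rfl⟩ <;> rw [hk] <;> split_ifs <;>
    first | rfl | omega | (congr 1; omega)

theorem stmt_13_general (m : ℕ) (hm : 2 ≤ m) (α : ℕ → ℝ)
    (A R L : Matrix (Fin m) (Fin m) ℝ)
    (hA : ∀ i j : Fin m, A i j =
      if (i : ℕ) < m - 1 then (if (j : ℕ) = (i : ℕ) + 1 then 1 else 0) else α j)
    (hR : ∀ i j : Fin m, R i j = if (i : ℕ) = ((j : ℕ) + 1) % m then 1 else 0)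
    (hL : ∀ i j : Fin m, L i j = if (j : ℕ) = ((i : ℕ) + 1) % m then 1 else 0)
    (T : ℕ → Matrix (Fin m) (Fin m) ℝ)
    (hT : ∀ k, 1 ≤ k → k ≤ m → ∀ i j : Fin m, T k i j =
      if (i : ℕ) = k - 1 then
        (if (j : ℕ) < k - 1 then α (m - (k - 1) + (j : ℕ)) else α ((j : ℕ) - (k - 1)))
      else (if i = j then 1 else 0)) :
    (∀ k, 1 ≤ k → k ≤ m →
      ((List.range k).map (fun j => T (k - j))).prod = R ^ k * A ^ k) ∧
    ((List.range m).map (fun j => T (m - j))).prod = A ^ m := by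
  have : NeZero m := ⟨by omega⟩
  have hR1 : R = shiftMatrix 1 := by
    ext i j
    rw [hR, shiftMatrix_apply]
    exact if_congr ((Fin.val_eq_val_add_one_mod_iff i j).trans
      (eq_comm.trans eq_sub_iff_add_eq.symm)) rfl rfl
  have hL1 : L = shiftMatrix (-1) := by
    ext i j
    rw [hL, shiftMatrix_apply, sub_neg_eq_add]
    exact if_congr (Fin.val_eq_val_add_one_mod_iff j i) rfl rfl
  have hLR : L * R = 1 := by
    rw [hR1, hL1, ← shiftMatrix_add, neg_add_cancel, shiftMatrix_zero]
  have hTk : ∀ k, 1 ≤ k → k ≤ m → T k = R ^ k * A * L ^ (k - 1) := fun k hk1 hkm => by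
    rw [hR1, hL1, shiftMatrix_pow, shiftMatrix_pow]
    exact eq_shiftMatrix_mul_mul_shiftMatrix α A hA hk1 hkm (T k) (hT k hk1 hkm)
  have hRm : R ^ m = 1 := by
    have hm1 : m • (1 : Fin m) = 0 := by
      rw [Fin.ext_iff, Fin.val_nsmul_one, Nat.mod_self, Fin.val_zero]
    rw [hR1, shiftMatrix_pow, hm1, shiftMatrix_zero]
  refine ⟨fun k _ hkm => List.prod_map_range_sub_eq_pow_mul_pow hLR hTk hkm, ?_⟩
  rw [List.prod_map_range_sub_eq_pow_mul_pow hLR hTk le_rfl, hRm, one_mul]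

/-- T_k T_{k-1} ⋯ T_1 = R^k A^k; in particular T = T_m ⋯ T_1 = A^m. -/
theorem stmt_13 (m : ℕ) (hm : 2 ≤ m) (α : ℕ → ℝ)
    (hα : ∀ i, i < m → 0 ≤ α i) (hsum : ∑ i ∈ Finset.range m, α i = 1)
    (A R L : Matrix (Fin m) (Fin m) ℝ)
    (hA : ∀ i j : Fin m, A i j =
      if (i : ℕ) < m - 1 then (if (j : ℕ) = (i : ℕ) + 1 then 1 else 0) else α j)
    (hR : ∀ i j : Fin m, R i j = if (i : ℕ) = ((j : ℕ) + 1) % m then 1 else 0)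
    (hL : ∀ i j : Fin m, L i j = if (j : ℕ) = ((i : ℕ) + 1) % m then 1 else 0)
    (T : ℕ → Matrix (Fin m) (Fin m) ℝ)
    (hT : ∀ k, 1 ≤ k → k ≤ m → ∀ i j : Fin m, T k i j =
      if (i : ℕ) = k - 1 then
        (if (j : ℕ) < k - 1 then α (m - (k - 1) + (j : ℕ)) else α ((j : ℕ) - (k - 1)))
      else (if i = j then 1 else 0)) :
    (∀ k, 1 ≤ k → k ≤ m →
      ((List.range k).map (fun j => T (k - j))).prod = R ^ k * A ^ k) ∧
    ((List.range m).map (fun j => T (m - j))).prod = A ^ m :=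
  stmt_13_general m hm α A R L hA hR hL T hT
end

section
/- Suppose α₀ = 0 and m ≥ 2. Then T_k is not nonexpansive with respect to the Euclidean norm: specifically T_k(e − e_k) = e, so ‖T_k(e − e_k)‖² = m > m−1 = ‖e − e_k‖². -/
/-- If α₀ = 0 then T_k is not nonexpansive in the Euclidean norm:
T_k(e − e_k) = e, so ‖T_k(e − e_k)‖² = m > m − 1 = ‖e − e_k‖². -/
theorem stmt_15 (m : ℕ) (hm : 2 ≤ m) (α : ℕ → ℝ)
    (hα : ∀ i, i < m → 0 ≤ α i) (hsum : ∑ i ∈ Finset.range m, α i = 1)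
    (h0 : α 0 = 0)
    (k : ℕ) (hk1 : 1 ≤ k) (hkm : k ≤ m)
    (T : Matrix (Fin m) (Fin m) ℝ)
    (hT : ∀ i j : Fin m, T i j =
      if (i : ℕ) = k - 1 then
        (if (j : ℕ) < k - 1 then α (m - (k - 1) + (j : ℕ)) else α ((j : ℕ) - (k - 1)))
      else (if i = j then 1 else 0))
    (v : Fin m → ℝ) (hv : v = fun j : Fin m => if (j : ℕ) = k - 1 then (0 : ℝ) else 1) :
    T.mulVec v = (fun _ => 1) ∧
    (∑ j, (T.mulVec v j) ^ 2 = (m : ℝ)) ∧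
    (∑ j, (v j) ^ 2 = (m : ℝ) - 1) ∧
    ¬ (∀ x y : Fin m → ℝ,
        Real.sqrt (∑ j, (T.mulVec x j - T.mulVec y j) ^ 2) ≤
        Real.sqrt (∑ j, (x j - y j) ^ 2)) := by
  have hkm' : k - 1 < m := by omega
  have hmain : T.mulVec v = (fun _ => 1) := by
    funext i
    simp only [Matrix.mulVec, dotProduct, hv]
    by_cases hi : (i : ℕ) = k - 1
    · have hrow : ∀ j : Fin m, T i j * (if (j : ℕ) = k - 1 then (0:ℝ) else 1)
          = α (if (j : ℕ) < k - 1 then m - (k - 1) + (j : ℕ) else (j : ℕ) - (k - 1)) := by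
        intro j
        rw [hT]
        by_cases hj : (j : ℕ) = k - 1
        · have : ¬ ((j : ℕ) < k - 1) := by omega
          simp [hi, hj, this, h0]
        · simp [hi, hj, apply_ite α]
      rw [Finset.sum_congr rfl (fun j _ => hrow j)]
      rw [Fin.sum_univ_eq_sum_range
        (fun j => α (if j < k - 1 then m - (k - 1) + j else j - (k - 1))) m]
      rw [← Finset.sum_range_add_sum_Ico _ (le_of_lt hkm')]
      have h1 : ∑ j ∈ Finset.range (k-1),
          α (if j < k - 1 then m - (k - 1) + j else j - (k - 1))
          = ∑ i ∈ Finset.Ico (m - (k-1)) m, α i := by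
        rw [Finset.sum_Ico_eq_sum_range]
        have hc : m - (m - (k-1)) = k - 1 := by omega
        rw [hc]
        apply Finset.sum_congr rfl
        intro j hj
        simp only [Finset.mem_range] at hj
        simp [hj]
      have h2 : ∑ j ∈ Finset.Ico (k-1) m,
          α (if j < k - 1 then m - (k - 1) + j else j - (k - 1))
          = ∑ i ∈ Finset.range (m - (k-1)), α i := by
        rw [Finset.sum_Ico_eq_sum_range]
        apply Finset.sum_congr rfl
        intro j hj
        have : ¬ (k - 1 + j < k - 1) := by omega
        simp [this]
      rw [h1, h2, add_comm, Finset.sum_range_add_sum_Ico _ (by omega : m - (k-1) ≤ m), hsum]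
    · have hrow : ∀ j : Fin m, T i j * (if (j : ℕ) = k - 1 then (0:ℝ) else 1)
          = if i = j then (if (j : ℕ) = k - 1 then (0:ℝ) else 1) else 0 := by
        intro j
        rw [hT]
        simp [hi]
        split_ifs <;> ring
      rw [Finset.sum_congr rfl (fun j _ => hrow j)]
      rw [Finset.sum_ite_eq Finset.univ i (fun j : Fin m => if (j:ℕ) = k - 1 then (0:ℝ) else 1)]
      simp [hi]
  have key : ∀ j : Fin m, ((if (j : ℕ) = k - 1 then (0:ℝ) else 1))^2
      = 1 - (if j = (⟨k-1, hkm'⟩ : Fin m) then (1:ℝ) else 0) := by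
    intro j
    by_cases hj : (j : ℕ) = k - 1
    · have hj' : j = (⟨k-1, hkm'⟩ : Fin m) := Fin.ext hj
      simp [hj, hj']
    · have hj' : j ≠ (⟨k-1, hkm'⟩ : Fin m) := fun h => hj (by simp [h])
      simp [hj, hj']
  have e2 : ∑ j, (v j) ^ 2 = (m : ℝ) - 1 := by
    subst hv
    rw [Finset.sum_congr rfl (fun j _ => key j)]
    rw [Finset.sum_sub_distrib]
    simp [Finset.card_univ]
  refine ⟨hmain, ?_, e2, ?_⟩
  · rw [hmain]
    simp [Finset.card_univ]
  · intro h
    have h' := h v 0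
    rw [hmain, Matrix.mulVec_zero] at h'
    simp only [Pi.zero_apply, sub_zero] at h'
    have e1 : ∑ _j : Fin m, ((1:ℝ))^2 = (m : ℝ) := by
      simp [Finset.card_univ]
    rw [e1, e2] at h'
    have hle : (m : ℝ) ≤ (m : ℝ) - 1 := by
      have h1 : (0:ℝ) ≤ (m:ℝ) - 1 := by
        have : (1:ℝ) ≤ (m:ℝ) := by exact_mod_cast Nat.one_le_of_lt hm
        linarith
      nlinarith [Real.sq_sqrt h1, Real.sq_sqrt (by positivity : (0:ℝ) ≤ (m:ℝ)),
        Real.sqrt_nonneg ((m:ℝ)-1), Real.sqrt_nonneg (m:ℝ)]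
    linarith
end

section
/- Under the Basic Hypothesis (1 is a simple root of p(x) = x^m − ∑ αᵢ xⁱ and all other complex roots have modulus < 1), the powers A^n of the companion matrix converge to the rank-one matrix e λᵀ, where λ_k = a_k / ∑_{j=0}^{m-1} a_j and a_k = ∑_{i=0}^k αᵢ; i.e., every row of lim A^n equals (λ₀,...,λ_{m-1}). -/
/-!
The all-ones vector `e` is fixed by `A` (the `αᵢ` sum to one) and the vector of partial sums `a`
is a left fixed vector (because `a_{m-1} = 1`), so with `λ = a / ∑ a` the rank-one matrix
`P = e λᵀ` is an idempotent with `A P = P A = P`, whence `Aⁿ = (A - P)ⁿ + P` for `n ≥ 1`.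
A nonzero eigenvalue `μ` of `A - P` is an eigenvalue of `A` with an eigenvector `v` such that
`λ ⬝ v = 0`. Eigenvectors of the companion matrix are multiples of `(1, μ, …, μ^{m-1})`, so `μ`
is a root of `p`, and `μ ≠ 1` since `λ ⬝ e = 1`. Hence `A - P` has spectral radius `< 1`, and
`(A - P)ⁿ → 0` by Gelfand's formula.
-/

open Polynomial Filter Topology Matrix Finset

theorem tendsto_pow_atTop_nhds_zero_of_forall_spectrum_norm_lt_one {A : Type*} [NormedRing A]
    [NormedAlgebra ℂ A] [CompleteSpace A] [Nontrivial A] {a : A}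
    (h : ∀ μ ∈ spectrum ℂ a, ‖μ‖ < 1) : Tendsto (a ^ ·) atTop (𝓝 0) := by
  have hρ : spectralRadius ℂ a < (1 : NNReal) :=
    spectrum.spectralRadius_lt_of_forall_lt a fun μ hμ => by exact_mod_cast h μ hμ
  obtain ⟨c, hρc, hc1⟩ := ENNReal.lt_iff_exists_nnreal_btwn.mp hρ
  have hbound : ∀ᶠ n : ℕ in atTop, ‖a ^ n‖ ≤ (c : ℝ) ^ n := by
    have hgelfand := spectrum.pow_nnnorm_pow_one_div_tendsto_nhds_spectralRadius a
    filter_upwards [hgelfand.eventually_lt_const hρc, eventually_gt_atTop 0] with n hn hn0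
    rw [one_div, ENNReal.rpow_inv_lt_iff (by exact_mod_cast hn0), ENNReal.rpow_natCast,
      ← ENNReal.coe_pow, ENNReal.coe_lt_coe, ← NNReal.coe_lt_coe] at hn
    exact_mod_cast hn.le
  exact squeeze_zero_norm' hbound
    (tendsto_pow_atTop_nhds_zero_of_lt_one c.coe_nonneg (by exact_mod_cast hc1))

theorem pow_eq_sub_pow_add_of_isIdempotentElem {R : Type*} [Ring R] {a p : R}
    (hp : IsIdempotentElem p) (hap : a * p = p) (hpa : p * a = p) {n : ℕ} (hn : n ≠ 0) :
    a ^ n = (a - p) ^ n + p := by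
  obtain ⟨b, rfl⟩ : ∃ b, a = b + p := ⟨a - p, (sub_add_cancel a p).symm⟩
  rw [add_sub_cancel_right]
  have hbp : b * p = 0 := by rwa [add_mul, hp.eq, add_eq_right] at hap
  have hpb : p * b = 0 := by rwa [mul_add, hp.eq, add_eq_right] at hpa
  induction n with
  | zero => contradiction
  | succ n ih =>
    rcases eq_or_ne n 0 with rfl | hn
    · simp
    obtain ⟨k, rfl⟩ := Nat.exists_eq_succ_of_ne_zero hn
    rw [pow_succ, ih hn, add_mul, mul_add, mul_add, ← pow_succ, pow_succ b k, mul_assoc, hbp,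
      mul_zero, hpb, hp.eq, add_zero, zero_add]

namespace Matrix

variable {n : Type*} [Fintype n] [DecidableEq n]

theorem exists_mulVec_eq_smul_of_mem_spectrum {K : Type*} [Field K] {M : Matrix n n K} {μ : K}
    (hμ : μ ∈ spectrum K M) : ∃ v ≠ 0, M *ᵥ v = μ • v := by
  rw [← spectrum_toLin', ← Module.End.hasEigenvalue_iff_mem_spectrum] at hμ
  obtain ⟨v, hv⟩ := hμ.exists_hasEigenvector
  exact ⟨v, hv.2, by simpa using hv.apply_eq_smul⟩

theorem exists_mulVec_eq_smul_of_mem_spectrum_sub_vecMulVec {K : Type*} [Field K]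
    {A : Matrix n n K} {w : n → K} (hw : w ᵥ* A = w) (hw1 : w ⬝ᵥ 1 = 1) {μ : K}
    (hμ : μ ∈ spectrum K (A - vecMulVec 1 w)) (hμ0 : μ ≠ 0) :
    ∃ v ≠ 0, A *ᵥ v = μ • v ∧ w ⬝ᵥ v = 0 := by
  obtain ⟨v, hv0, hv⟩ := exists_mulVec_eq_smul_of_mem_spectrum hμ
  have hwB : w ᵥ* (A - vecMulVec 1 w) = 0 := by
    rw [vecMul_sub, hw, vecMul_vecMulVec, hw1, one_smul, sub_self]
  have hwv : w ⬝ᵥ v = 0 := by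
    have := congrArg (w ⬝ᵥ ·) hv
    simp only [dotProduct_mulVec, hwB, zero_dotProduct, dotProduct_smul, smul_eq_mul] at this
    exact (mul_eq_zero.mp this.symm).resolve_left hμ0
  refine ⟨v, hv0, ?_, hwv⟩
  rw [← hv, sub_mulVec, vecMulVec_mulVec, hwv]
  simp

theorem tendsto_pow_atTop_nhds_zero_of_forall_spectrum_norm_lt_one [Nonempty n] {M : Matrix n n ℂ}
    (h : ∀ μ ∈ spectrum ℂ M, ‖μ‖ < 1) : Tendsto (M ^ ·) atTop (𝓝 0) := by
  -- Any Banach algebra norm inducing the entrywise topology will do.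
  let _ := Matrix.linftyOpNormedRing (n := n) (α := ℂ)
  let _ := Matrix.linftyOpNormedAlgebra (n := n) (R := ℂ) (α := ℂ)
  exact _root_.tendsto_pow_atTop_nhds_zero_of_forall_spectrum_norm_lt_one h

theorem tendsto_pow_atTop_nhds_vecMulVec_one [Nonempty n] {A : Matrix n n ℂ} {w : n → ℂ}
    (hA : A *ᵥ 1 = 1) (hw : w ᵥ* A = w) (hw1 : w ⬝ᵥ 1 = 1)
    (hspec : ∀ μ ∈ spectrum ℂ (A - vecMulVec 1 w), ‖μ‖ < 1) :
    Tendsto (A ^ ·) atTop (𝓝 (vecMulVec 1 w)) := by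
  have hP : IsIdempotentElem (vecMulVec 1 w : Matrix n n ℂ) := by
    rw [IsIdempotentElem, vecMulVec_mul_vecMulVec, hw1, one_smul]
  have hlim := (tendsto_pow_atTop_nhds_zero_of_forall_spectrum_norm_lt_one hspec).add_const
    (vecMulVec 1 w)
  rw [zero_add] at hlim
  refine hlim.congr' ((eventually_ne_atTop 0).mono fun k hk => ?_)
  exact (pow_eq_sub_pow_add_of_isIdempotentElem hP (by rw [mul_vecMulVec, hA])
    (by rw [vecMulVec_mul, hw]) hk).symm

end Matrix

def companionMatrix {R : Type*} [Zero R] [One R] (m : ℕ) (α : ℕ → R) :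
    Matrix (Fin m) (Fin m) R :=
  Matrix.of fun i j => if (i : ℕ) < m - 1 then (if (j : ℕ) = i + 1 then 1 else 0) else α j

section companionMatrix

variable {R : Type*} [CommRing R] {m : ℕ} (α : ℕ → R)

theorem companionMatrix_map {S : Type*} [CommRing S] (f : R →+* S) :
    (companionMatrix m α).map f = companionMatrix m (f ∘ α) := by
  ext i j
  simp [companionMatrix, apply_ite f]

theorem companionMatrix_mulVec_of_lt (v : Fin m → R) {i : Fin m} (hi : (i : ℕ) < m - 1) :
    (companionMatrix m α *ᵥ v) i = v ⟨i + 1, by omega⟩ := by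
  simp only [companionMatrix, mulVec, dotProduct, of_apply, hi, if_true, ite_mul, one_mul,
    zero_mul]
  exact (Fintype.sum_eq_single (⟨i + 1, by omega⟩ : Fin m)
    fun j hj => if_neg fun h => hj (Fin.ext h)).trans (if_pos rfl)

theorem companionMatrix_mulVec_of_not_lt (v : Fin m → R) {i : Fin m} (hi : ¬(i : ℕ) < m - 1) :
    (companionMatrix m α *ᵥ v) i = ∑ j : Fin m, α j * v j := by
  simp [companionMatrix, mulVec, dotProduct, hi]

theorem companionMatrix_mulVec_one (hα : ∑ i ∈ range m, α i = 1) :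
    companionMatrix m α *ᵥ 1 = 1 := by
  ext i
  by_cases hi : (i : ℕ) < m - 1
  · rw [companionMatrix_mulVec_of_lt α _ hi, Pi.one_apply, Pi.one_apply]
  · rw [companionMatrix_mulVec_of_not_lt α _ hi, Pi.one_apply]
    simpa [Fin.sum_univ_eq_sum_range (fun j => α j)] using hα

theorem partialSums_vecMul_companionMatrix (hα : ∑ i ∈ range m, α i = 1) :
    (fun j : Fin m => ∑ i ∈ range (j + 1), α i) ᵥ* companionMatrix m α =
      fun j : Fin m => ∑ i ∈ range (j + 1), α i := by
  ext j
  obtain ⟨k, rfl⟩ := Nat.exists_eq_add_one_of_ne_zero j.pos.ne'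
  simp only [vecMul, dotProduct, companionMatrix, of_apply, Nat.add_sub_cancel]
  rw [Fin.sum_univ_eq_sum_range (fun i => (∑ l ∈ range (i + 1), α l) *
    if i < k then (if (j : ℕ) = i + 1 then 1 else 0) else α j) (k + 1), sum_range_succ,
    if_neg (lt_irrefl k), hα]
  rw [sum_congr rfl fun i hi => by rw [if_pos (mem_range.mp hi)]]
  simp only [mul_ite, mul_one, mul_zero, one_mul]
  obtain ⟨_ | j, hj⟩ := j
  · simp
  · simp only [Nat.add_right_cancel_iff, sum_ite_eq, mem_range.mpr (Nat.succ_lt_succ_iff.mp hj),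
      if_true]
    exact (sum_range_succ α (j + 1)).symm

theorem eq_smul_powers_of_companionMatrix_mulVec_eq_smul [NeZero m] {v : Fin m → R} {μ : R}
    (hv : companionMatrix m α *ᵥ v = μ • v) : v = v 0 • fun i : Fin m => μ ^ (i : ℕ) := by
  ext ⟨i, hi⟩
  induction i with
  | zero => simp
  | succ i ih =>
    have := companionMatrix_mulVec_of_lt α v (i := ⟨i, by omega⟩) (by simp; omega)
    rw [hv, Pi.smul_apply, ih (by omega)] at this
    simp only [← this, Pi.smul_apply, smul_eq_mul, pow_succ]
    ring

theorem isRoot_of_companionMatrix_mulVec_eq_smul [IsDomain R] [NeZero m] {v : Fin m → R}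
    {μ : R} (hv : companionMatrix m α *ᵥ v = μ • v) (hv0 : v ≠ 0) :
    (X ^ m - ∑ i ∈ range m, C (α i) * X ^ i).IsRoot μ := by
  have hv' := eq_smul_powers_of_companionMatrix_mulVec_eq_smul α hv
  have h0 : v 0 ≠ 0 := fun h => hv0 (by rw [hv', h, zero_smul])
  have hlast := companionMatrix_mulVec_of_not_lt α v (i := ⟨m - 1, by simp [NeZero.pos m]⟩)
    (lt_irrefl _)
  rw [hv, hv'] at hlast
  have hroot : μ ^ m = ∑ i ∈ range m, α i * μ ^ i := by
    refine mul_left_cancel₀ h0 ?_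
    rw [mul_sum, ← Fin.sum_univ_eq_sum_range (fun i => v 0 * (α i * μ ^ i))]
    simp only [Pi.smul_apply, smul_eq_mul] at hlast
    rw [← pow_sub_one_mul (NeZero.ne m)]
    convert hlast using 1
    · ring
    · exact sum_congr rfl fun i _ => by ring
  simp [hroot, eval_finsetSum]

end companionMatrix

theorem one_le_sum_range_partialSums {R : Type*} [AddCommMonoid R] [PartialOrder R]
    [IsOrderedAddMonoid R] [One R] {m : ℕ} (hm : m ≠ 0) {α : ℕ → R} (hα : ∀ i < m, 0 ≤ α i)
    (hsum : ∑ i ∈ range m, α i = 1) : 1 ≤ ∑ k ∈ range m, ∑ i ∈ range (k + 1), α i := by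
  calc (1 : R) = ∑ i ∈ range (m - 1 + 1), α i := by rw [Nat.sub_add_cancel (by omega), hsum]
    _ ≤ ∑ k ∈ range m, ∑ i ∈ range (k + 1), α i := by
      refine single_le_sum (f := fun k => ∑ i ∈ range (k + 1), α i) (fun k hk => ?_)
        (mem_range.mpr (by omega))
      exact sum_nonneg fun i hi => hα i (by simp only [mem_range] at hi hk; omega)

theorem norm_lt_one_of_mem_spectrum_companionMatrix_sub_vecMulVec {K : Type*} [NormedField K]
    {m : ℕ} [NeZero m] {α : ℕ → K}
    (hroots : ∀ z, (X ^ m - ∑ i ∈ range m, C (α i) * X ^ i).IsRoot z → z ≠ 1 → ‖z‖ < 1)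
    {w : Fin m → K} (hw : w ᵥ* companionMatrix m α = w) (hw1 : w ⬝ᵥ 1 = 1) :
    ∀ μ ∈ spectrum K (companionMatrix m α - vecMulVec 1 w), ‖μ‖ < 1 := by
  intro μ hμ
  rcases eq_or_ne μ 0 with rfl | hμ0
  · simp
  obtain ⟨v, hv0, hv, hwv⟩ :=
    exists_mulVec_eq_smul_of_mem_spectrum_sub_vecMulVec hw hw1 hμ hμ0
  refine hroots μ (isRoot_of_companionMatrix_mulVec_eq_smul α hv hv0) ?_
  rintro rfl
  have hv' := eq_smul_powers_of_companionMatrix_mulVec_eq_smul α hv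
  refine hv0 (hv'.trans ?_)
  have h0 : v 0 = 0 := by
    rw [hv', dotProduct_smul, smul_eq_mul] at hwv
    simpa [← Pi.one_def, hw1] using hwv
  rw [h0, zero_smul]

theorem tendsto_pow_companionMatrix {m : ℕ} [NeZero m] {α : ℕ → ℂ}
    (hsum : ∑ i ∈ range m, α i = 1)
    (hroots : ∀ z, (X ^ m - ∑ i ∈ range m, C (α i) * X ^ i).IsRoot z → z ≠ 1 → ‖z‖ < 1)
    (hS : ∑ k ∈ range m, ∑ i ∈ range (k + 1), α i ≠ 0) :
    Tendsto (companionMatrix m α ^ ·) atTop (𝓝 (of fun _ j : Fin m =>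
      (∑ i ∈ range (j + 1), α i) / ∑ k ∈ range m, ∑ i ∈ range (k + 1), α i)) := by
  set S := ∑ k ∈ range m, ∑ i ∈ range (k + 1), α i
  set w : Fin m → ℂ := S⁻¹ • fun j : Fin m => ∑ i ∈ range (j + 1), α i with hw_def
  have hw : w ᵥ* companionMatrix m α = w := by
    rw [hw_def, smul_vecMul, partialSums_vecMul_companionMatrix α hsum]
  have hw1 : w ⬝ᵥ 1 = 1 := by
    rw [hw_def, smul_dotProduct, dotProduct_one,
      Fin.sum_univ_eq_sum_range (fun j => ∑ i ∈ range (j + 1), α i), smul_eq_mul,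
      inv_mul_cancel₀ hS]
  convert tendsto_pow_atTop_nhds_vecMulVec_one (companionMatrix_mulVec_one α hsum) hw hw1
    (norm_lt_one_of_mem_spectrum_companionMatrix_sub_vecMulVec hroots hw hw1) using 2
  ext
  simp [w, vecMulVec, div_eq_inv_mul]

theorem stmt_16_general (m : ℕ) (α : ℕ → ℝ)
    (hα : ∀ i, i < m → 0 ≤ α i) (hsum : ∑ i ∈ Finset.range m, α i = 1)
    (hmod : ∀ z : ℂ,
      ((X ^ m - ∑ i ∈ Finset.range m, C (α i) * X ^ i : Polynomial ℝ).map
        (algebraMap ℝ ℂ)).IsRoot z → z ≠ 1 → ‖z‖ < 1)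
    (A : Matrix (Fin m) (Fin m) ℝ)
    (hA : ∀ i j : Fin m, A i j =
      if (i : ℕ) < m - 1 then (if (j : ℕ) = (i : ℕ) + 1 then 1 else 0) else α j)
    (a : ℕ → ℝ) (ha : ∀ k, a k = ∑ i ∈ Finset.range (k + 1), α i)
    (lam : ℕ → ℝ) (hlam : ∀ k, lam k = a k / ∑ j ∈ Finset.range m, a j) :
    Tendsto (fun n => A ^ n) atTop
      (nhds (Matrix.of fun _ j : Fin m => lam j)) := by
  have : NeZero m := ⟨by rintro rfl; simp at hsum⟩
  have hS : 1 ≤ ∑ k ∈ range m, ∑ i ∈ range (k + 1), α i :=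
    one_le_sum_range_partialSums (NeZero.ne m) hα hsum
  have hlim := tendsto_pow_companionMatrix (α := fun i => (α i : ℂ)) (by exact_mod_cast hsum)
    (fun z hz => hmod z (by simpa [Polynomial.map_sum] using hz))
    (by exact_mod_cast (one_pos.trans_le hS).ne')
  rw [show A = companionMatrix m α from ext hA]
  refine Complex.isometry_ofReal.isEmbedding.isInducing.matrix_map.tendsto_nhds_iff.mpr ?_
  convert hlim using 2 with k
  · exact (map_pow Complex.ofRealHom.mapMatrix _ k).trans
      (congrArg (· ^ k) (companionMatrix_map α Complex.ofRealHom))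
  · ext
    simp [hlam, ha]

/-- Under the Basic Hypothesis, Aⁿ → e λᵀ: every row of the limit is (λ₀,…,λ_{m-1}). -/
theorem stmt_16 (m : ℕ) (hm : 2 ≤ m) (α : ℕ → ℝ)
    (hα : ∀ i, i < m → 0 ≤ α i) (hsum : ∑ i ∈ Finset.range m, α i = 1)
    (hsimple : (X ^ m - ∑ i ∈ Finset.range m, C (α i) * X ^ i : Polynomial ℝ).rootMultiplicity 1 = 1)
    (hmod : ∀ z : ℂ,
      ((X ^ m - ∑ i ∈ Finset.range m, C (α i) * X ^ i : Polynomial ℝ).map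
        (algebraMap ℝ ℂ)).IsRoot z → z ≠ 1 → ‖z‖ < 1)
    (A : Matrix (Fin m) (Fin m) ℝ)
    (hA : ∀ i j : Fin m, A i j =
      if (i : ℕ) < m - 1 then (if (j : ℕ) = (i : ℕ) + 1 then 1 else 0) else α j)
    (a : ℕ → ℝ) (ha : ∀ k, a k = ∑ i ∈ Finset.range (k + 1), α i)
    (lam : ℕ → ℝ) (hlam : ∀ k, lam k = a k / ∑ j ∈ Finset.range m, a j) :
    Tendsto (fun n => A ^ n) atTop
      (nhds (Matrix.of fun _ j : Fin m => lam j)) :=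
  stmt_16_general m α hα hsum hmod A hA a ha lam hlam
end

section
/- Let m ≥ 2, γ = 1/(m−1), α₀ = 0, α₁ = ... = α_{m-1} = γ. Define T̃ ∈ ℝ^{m×m} by T̃_{i,j} = γ(1+γ)^{i−1} if i < j, and T̃_{i,j} = γ(1+γ)^{i−1} − γ(1+γ)^{i−j} if i ≥ j. Then for every k ∈ {1,...,m}, the product T_k T_{k-1} ··· T_1 equals the matrix whose first k rows are the first k rows of T̃ and whose remaining rows are rows of the identity; in particular T_m ··· T_1 = T̃. -/
lemma gsum_aux (γ : ℝ) (jn : ℕ) : ∀ k, ∑ n ∈ Finset.range k,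
    (if n < jn then γ*(1+γ)^n else γ*(1+γ)^n - γ*(1+γ)^(n-jn))
    = if k ≤ jn then (1+γ)^k - 1 else (1+γ)^k - (1+γ)^(k-jn) := by
  intro k
  induction k with
  | zero => simp
  | succ k ih =>
    rw [Finset.sum_range_succ, ih]
    by_cases h : k < jn
    · rw [if_pos h, if_pos h.le, if_pos (show k + 1 ≤ jn from h), pow_succ]
      ring
    · push_neg at h
      have h1 : k + 1 - jn = (k - jn) + 1 := by omega
      rw [if_neg (not_lt.mpr h), if_neg (by omega : ¬ k + 1 ≤ jn), h1, pow_succ, pow_succ]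
      by_cases h2 : k ≤ jn
      · have hjk : jn = k := le_antisymm h h2
        subst hjk
        rw [if_pos le_rfl, Nat.sub_self]
        ring
      · rw [if_neg h2]
        ring

/-- Closed form for the partial products T_k⋯T_1 in the special case
α₀ = 0, α₁ = ⋯ = α_{m-1} = γ = 1/(m-1). -/
theorem stmt_17 (m : ℕ) (hm : 2 ≤ m) (γ : ℝ) (hγ : γ = 1 / ((m : ℝ) - 1))
    (T : ℕ → Matrix (Fin m) (Fin m) ℝ)
    (hT : ∀ k, 1 ≤ k → k ≤ m → ∀ i j : Fin m, T k i j =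
      if (i : ℕ) = k - 1 then (if (j : ℕ) = k - 1 then 0 else γ)
      else (if i = j then 1 else 0))
    (Ttil : Matrix (Fin m) (Fin m) ℝ)
    (hTtil : ∀ i j : Fin m, Ttil i j =
      if (i : ℕ) < (j : ℕ) then γ * (1 + γ) ^ (i : ℕ)
      else γ * (1 + γ) ^ (i : ℕ) - γ * (1 + γ) ^ ((i : ℕ) - (j : ℕ))) :
    (∀ k, 1 ≤ k → k ≤ m → ∀ i j : Fin m,
      (((List.range k).map (fun j => T (k - j))).prod) i j =
        if (i : ℕ) < k then Ttil i j else (if i = j then 1 else 0)) ∧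
    ((List.range m).map (fun j => T (m - j))).prod = Ttil := by
  have main : ∀ k, k ≤ m → ∀ i j : Fin m,
      (((List.range k).map (fun j => T (k - j))).prod) i j =
        if (i : ℕ) < k then Ttil i j else (if i = j then 1 else 0) := by
    intro k
    induction k with
    | zero =>
      intro _ i j
      simp [Matrix.one_apply]
    | succ k ih =>
      intro hk i j
      have hk' : k ≤ m := Nat.le_of_succ_le hk
      have hprod : ((List.range (k+1)).map (fun j => T (k+1 - j))).prod
          = T (k+1) * ((List.range k).map (fun j => T (k - j))).prod := by
        rw [List.range_succ_eq_map]
        simp [List.map_map, Function.comp_def, Nat.succ_sub_succ]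
      rw [hprod, Matrix.mul_apply]
      by_cases hik : (i : ℕ) = k
      · -- the active row
        have hsum : ∀ l : Fin m,
            T (k+1) i l * (((List.range k).map (fun j => T (k - j))).prod) l j
            = (fun n => (if n = k then 0 else γ) *
                (if n < k then (if n < (j:ℕ) then γ*(1+γ)^n
                  else γ*(1+γ)^n - γ*(1+γ)^(n-(j:ℕ)))
                 else if n = (j:ℕ) then 1 else 0)) (l : ℕ) := by
          intro l
          rw [hT (k+1) (by omega) hk i l, ih hk' l j, hTtil l j]
          simp only [Nat.add_sub_cancel, hik, if_true, Fin.ext_iff, eq_self_iff_true]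
        rw [Finset.sum_congr rfl fun l _ => hsum l,
          Fin.sum_univ_eq_sum_range (fun n => (if n = k then 0 else γ) *
            (if n < k then (if n < (j:ℕ) then γ*(1+γ)^n
              else γ*(1+γ)^n - γ*(1+γ)^(n-(j:ℕ)))
             else if n = (j:ℕ) then 1 else 0)) m]
        rw [← Finset.sum_range_add_sum_Ico _ (le_of_lt hk)]
        have h1 : ∑ n ∈ Finset.range k, (if n = k then 0 else γ) *
            (if n < k then (if n < (j:ℕ) then γ*(1+γ)^n
              else γ*(1+γ)^n - γ*(1+γ)^(n-(j:ℕ)))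
             else if n = (j:ℕ) then 1 else 0)
            = γ * (if k ≤ (j:ℕ) then (1+γ)^k - 1 else (1+γ)^k - (1+γ)^(k-(j:ℕ))) := by
          rw [← gsum_aux, Finset.mul_sum]
          refine Finset.sum_congr rfl fun n hn => ?_
          have hn' := Finset.mem_range.mp hn
          rw [if_neg (by omega), if_pos hn']
        have h2 : ∑ n ∈ Finset.Ico k m, (if n = k then 0 else γ) *
            (if n < k then (if n < (j:ℕ) then γ*(1+γ)^n
              else γ*(1+γ)^n - γ*(1+γ)^(n-(j:ℕ)))
             else if n = (j:ℕ) then 1 else 0)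
            = if k < (j:ℕ) then γ else 0 := by
          by_cases hkj : k < (j:ℕ)
          · rw [if_pos hkj]
            rw [Finset.sum_eq_single (j:ℕ)]
            · rw [if_neg (by omega), if_neg (by omega), if_pos rfl, mul_one]
            · intro b hb hbj
              have hb' := Finset.mem_Ico.mp hb
              by_cases hbk : b = k
              · rw [if_pos hbk, zero_mul]
              · rw [if_neg (by omega : ¬ b < k), if_neg hbj, mul_zero]
            · intro hj
              exact absurd (Finset.mem_Ico.mpr ⟨by omega, j.isLt⟩) hj
          · rw [if_neg hkj]
            refine Finset.sum_eq_zero fun b hb => ?_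
            have hb' := Finset.mem_Ico.mp hb
            by_cases hbk : b = k
            · rw [if_pos hbk, zero_mul]
            · rw [if_neg hbk, if_neg (by omega : ¬ b < k), if_neg (by omega : ¬ b = (j:ℕ)),
                mul_zero]
        rw [h1, h2, if_pos (by omega : (i:ℕ) < k + 1), hTtil i j, hik]
        by_cases hkj : k < (j:ℕ)
        · rw [if_pos hkj, if_pos hkj, if_pos hkj.le]
          ring
        · rw [if_neg hkj, if_neg hkj]
          by_cases hke : k ≤ (j:ℕ)
          · have : (j:ℕ) = k := by omega
            rw [if_pos hke, this, Nat.sub_self]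
            ring
          · rw [if_neg hke]
            ring
      · -- identity rows
        have hsum : ∀ l : Fin m,
            T (k+1) i l * (((List.range k).map (fun j => T (k - j))).prod) l j
            = (if i = l then 1 else 0) *
              (((List.range k).map (fun j => T (k - j))).prod) l j := by
          intro l
          rw [hT (k+1) (by omega) hk i l]
          rw [if_neg (by omega : ¬ (i:ℕ) = k + 1 - 1)]
        simp only [hsum, ite_mul, one_mul, zero_mul]
        rw [Finset.sum_ite_eq Finset.univ i
          (fun l => (((List.range k).map (fun j => T (k - j))).prod) l j),
          if_pos (Finset.mem_univ i), ih hk' i j]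
        by_cases h : (i:ℕ) < k
        · rw [if_pos h, if_pos (by omega : (i:ℕ) < k + 1)]
        · rw [if_neg h, if_neg (by omega : ¬ (i:ℕ) < k + 1)]
  refine ⟨fun k _ hkm => main k hkm, ?_⟩
  ext i j
  rw [main m le_rfl i j, if_pos i.isLt]
end

section
/- Let m ≥ 2 with equal weights αᵢ = 1/m. Let D ⊆ ℝ, f : D → ℝ injective and continuous with continuous inverse on f(D), with f(D) convex. Define y_n = f⁻¹((1/m)(f(y_{n-1}) + ... + f(y_{n-m}))) for n ≥ m with initial data y₀,...,y_{m-1} ∈ D. Then (y_n) is well defined and converges to f⁻¹( (2/(m(m+1))) ∑_{j=0}^{m-1} (j+1) f(y_j) ). -/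
open Filter Finset


lemma sum_range_add_one_real (n : ℕ) :
    ∑ i ∈ Finset.range n, ((i : ℝ) + 1) = n * (n + 1) / 2 := by
  induction n with
  | zero => simp
  | succ n ih => rw [Finset.sum_range_succ, ih]; push_cast; ring

theorem avg_rec_tendsto (m : ℕ) (hm : 2 ≤ m) (z : ℕ → ℝ)
    (hz : ∀ n, z (n + m) = (1 / (m : ℝ)) * ∑ i ∈ Finset.range m, z (n + i)) :
    Tendsto z atTop
      (nhds ((2 / ((m : ℝ) * ((m : ℝ) + 1))) *
        ∑ j ∈ Finset.range m, ((j : ℝ) + 1) * z j)) := by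
  have hm0 : 0 < m := by omega
  have hmR : (0 : ℝ) < m := by exact_mod_cast hm0
  have hne : (Finset.range m).Nonempty := ⟨0, mem_range.2 hm0⟩
  set M : ℕ → ℝ := fun n => (range m).sup' hne fun i => z (n + i) with hMdef
  set I : ℕ → ℝ := fun n => (range m).inf' hne fun i => z (n + i) with hIdef
  -- Lemma A : all later terms are ≤ M n
  have lemA : ∀ n j, n ≤ j → z j ≤ M n := by
    intro n j
    induction j using Nat.strong_induction_on with
    | _ j ih =>
      intro hnj
      by_cases hj : j < n + m
      · have h1 : j - n ∈ range m := mem_range.2 (by omega)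
        have h2 : z (n + (j - n)) ≤ M n := Finset.le_sup' (fun i => z (n + i)) h1
        rwa [Nat.add_sub_cancel' hnj] at h2
      · push_neg at hj
        have hpm : j = (j - m) + m := by omega
        have hsum : ∑ i ∈ range m, z (j - m + i) ≤ (m : ℝ) * M n := by
          calc ∑ i ∈ range m, z (j - m + i) ≤ ∑ _i ∈ range m, M n :=
                Finset.sum_le_sum fun i hi => ih _ (by have := mem_range.1 hi; omega)
                  (by have := mem_range.1 hi; omega)
            _ = (m : ℝ) * M n := by simp [mul_comm]
        rw [hpm, hz (j - m)]
        calc (1 / (m : ℝ)) * ∑ i ∈ range m, z (j - m + i)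
            ≤ (1 / (m : ℝ)) * ((m : ℝ) * M n) :=
              mul_le_mul_of_nonneg_left hsum (by positivity)
          _ = M n := by field_simp
  have lemA' : ∀ n j, n ≤ j → I n ≤ z j := by
    intro n j
    induction j using Nat.strong_induction_on with
    | _ j ih =>
      intro hnj
      by_cases hj : j < n + m
      · have h1 : j - n ∈ range m := mem_range.2 (by omega)
        have h2 : I n ≤ z (n + (j - n)) := Finset.inf'_le (fun i => z (n + i)) h1
        rwa [Nat.add_sub_cancel' hnj] at h2
      · push_neg at hj
        have hpm : j = (j - m) + m := by omega
        have hsum : (m : ℝ) * I n ≤ ∑ i ∈ range m, z (j - m + i) := by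
          calc (m : ℝ) * I n = ∑ _i ∈ range m, I n := by simp [mul_comm]
            _ ≤ ∑ i ∈ range m, z (j - m + i) :=
                Finset.sum_le_sum fun i hi => ih _ (by have := mem_range.1 hi; omega)
                  (by have := mem_range.1 hi; omega)
        rw [hpm, hz (j - m)]
        calc I n = (1 / (m : ℝ)) * ((m : ℝ) * I n) := by field_simp
          _ ≤ (1 / (m : ℝ)) * ∑ i ∈ range m, z (j - m + i) :=
              mul_le_mul_of_nonneg_left hsum (by positivity)
  have hIM : ∀ n, I n ≤ M n := fun n => le_trans (lemA' n n le_rfl) (lemA n n le_rfl)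
  have hManti : ∀ n p, n ≤ p → M p ≤ M n := fun n p h =>
    Finset.sup'_le _ _ fun i _ => lemA n (p + i) (by omega)
  have hImono : ∀ n p, n ≤ p → I n ≤ I p := fun n p h =>
    Finset.le_inf' _ _ fun i _ => lemA' n (p + i) (by omega)
  -- Lemma B : contraction of the max
  have lemB : ∀ n k, z (n + m + k) ≤ M n - (M n - I n) / (m : ℝ) ^ (k + 1) := by
    intro n k
    induction k with
    | zero =>
      obtain ⟨i0, hi0mem, hi0⟩ := Finset.exists_mem_eq_inf' hne (fun i => z (n + i))
      have hi0' : I n = z (n + i0) := hi0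
      have hterm : M n - I n ≤ ∑ i ∈ range m, (M n - z (n + i)) := by
        rw [hi0']
        exact Finset.single_le_sum (f := fun i => M n - z (n + i))
          (fun i _ => sub_nonneg.2 (lemA n (n + i) (by omega))) hi0mem
      have hsum : ∑ i ∈ range m, z (n + i) ≤ (m : ℝ) * M n - (M n - I n) := by
        have hd : ∑ i ∈ range m, (M n - z (n + i))
            = (m : ℝ) * M n - ∑ i ∈ range m, z (n + i) := by
          rw [Finset.sum_sub_distrib]; simp [mul_comm]
        linarith [hterm, hd.symm.le, hd.le]
      simp only [Nat.add_zero]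
      rw [hz n]
      calc (1 / (m : ℝ)) * ∑ i ∈ range m, z (n + i)
          ≤ (1 / (m : ℝ)) * ((m : ℝ) * M n - (M n - I n)) :=
            mul_le_mul_of_nonneg_left hsum (by positivity)
        _ = M n - (M n - I n) / (m : ℝ) ^ (0 + 1) := by field_simp; ring
    | succ k ihk =>
      have hidx : n + (k + 1) + (m - 1) = n + m + k := by omega
      have hlast : (M n - I n) / (m : ℝ) ^ (k + 1) ≤ M n - z (n + (k + 1) + (m - 1)) := by
        rw [hidx]; linarith [ihk]
      have hterm : (M n - I n) / (m : ℝ) ^ (k + 1)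
          ≤ ∑ i ∈ range m, (M n - z (n + (k + 1) + i)) := by
        have hmem : m - 1 ∈ range m := mem_range.2 (by omega)
        calc (M n - I n) / (m : ℝ) ^ (k + 1) ≤ M n - z (n + (k + 1) + (m - 1)) := hlast
          _ ≤ ∑ i ∈ range m, (M n - z (n + (k + 1) + i)) :=
            Finset.single_le_sum (f := fun i => M n - z (n + (k + 1) + i))
              (fun i _ => sub_nonneg.2 (lemA n _ (by omega))) hmem
      have hsum : ∑ i ∈ range m, z (n + (k + 1) + i)
          ≤ (m : ℝ) * M n - (M n - I n) / (m : ℝ) ^ (k + 1) := by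
        have hd : ∑ i ∈ range m, (M n - z (n + (k + 1) + i))
            = (m : ℝ) * M n - ∑ i ∈ range m, z (n + (k + 1) + i) := by
          rw [Finset.sum_sub_distrib]; simp [mul_comm]
        linarith [hterm, hd.le]
      have hre : n + m + (k + 1) = (n + (k + 1)) + m := by omega
      rw [hre, hz (n + (k + 1))]
      calc (1 / (m : ℝ)) * ∑ i ∈ range m, z (n + (k + 1) + i)
          ≤ (1 / (m : ℝ)) * ((m : ℝ) * M n - (M n - I n) / (m : ℝ) ^ (k + 1)) :=
            mul_le_mul_of_nonneg_left hsum (by positivity)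
        _ = M n - (M n - I n) / (m : ℝ) ^ (k + 1 + 1) := by field_simp; ring
  have hMcontr : ∀ n, M (n + m) ≤ M n - (M n - I n) / (m : ℝ) ^ m := by
    intro n
    apply Finset.sup'_le
    intro k hk
    have hk' : k < m := mem_range.1 hk
    calc z (n + m + k) ≤ M n - (M n - I n) / (m : ℝ) ^ (k + 1) := lemB n k
      _ ≤ M n - (M n - I n) / (m : ℝ) ^ m := by
          have h1 : (M n - I n) / (m : ℝ) ^ m ≤ (M n - I n) / (m : ℝ) ^ (k + 1) := by
            apply div_le_div_of_nonneg_left (by linarith [hIM n]) (by positivity)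
            exact pow_le_pow_right₀ (by exact_mod_cast by omega : (1:ℝ) ≤ m) (by omega)
          linarith
  set osc : ℕ → ℝ := fun n => M n - I n with hoscdef
  have hosc_nonneg : ∀ n, 0 ≤ osc n := fun n => by simp [hoscdef]; linarith [hIM n]
  have hosc_anti : ∀ n p, n ≤ p → osc p ≤ osc n := fun n p h => by
    have := hManti n p h; have := hImono n p h; simp only [hoscdef]; linarith
  set r : ℝ := 1 - 1 / (m : ℝ) ^ m with hrdef
  have hpow1 : (1 : ℝ) ≤ (m : ℝ) ^ m := by exact_mod_cast Nat.one_le_pow m m hm0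
  have hr0 : 0 ≤ r := by
    have h : 1 / (m : ℝ) ^ m ≤ 1 := by
      rw [div_le_one (by positivity)]; exact hpow1
    rw [hrdef]; linarith
  have hr1 : r < 1 := by
    have h : 0 < 1 / (m : ℝ) ^ m := by positivity
    rw [hrdef]; linarith
  have hcontr : ∀ n, osc (n + m) ≤ r * osc n := by
    intro n
    have h1 := hMcontr n
    have h2 := hImono n (n + m) (by omega)
    simp only [hoscdef, hrdef]
    have : (M n - I n) / (m : ℝ) ^ m = (1 / (m : ℝ) ^ m) * (M n - I n) := by ring
    nlinarith [h1, h2]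
  have hgeo : ∀ k, osc (k * m) ≤ r ^ k * osc 0 := by
    intro k
    induction k with
    | zero => simp
    | succ k ih =>
      have h1 : (k + 1) * m = k * m + m := by ring
      calc osc ((k + 1) * m) = osc (k * m + m) := by rw [h1]
        _ ≤ r * osc (k * m) := hcontr (k * m)
        _ ≤ r * (r ^ k * osc 0) := mul_le_mul_of_nonneg_left ih hr0
        _ = r ^ (k + 1) * osc 0 := by ring
  have hoscn : ∀ n, osc n ≤ r ^ (n / m) * osc 0 := by
    intro n
    calc osc n ≤ osc (n / m * m) := hosc_anti _ _ (Nat.div_mul_le_self n m)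
      _ ≤ r ^ (n / m) * osc 0 := hgeo (n / m)
  have hdiv : Tendsto (fun n : ℕ => n / m) atTop atTop := by
    apply tendsto_atTop_atTop.2
    intro b
    exact ⟨b * m, fun n hn => (Nat.le_div_iff_mul_le hm0).2 hn⟩
  have htend0 : Tendsto (fun n : ℕ => r ^ (n / m) * osc 0) atTop (nhds 0) := by
    have h1 : Tendsto (fun k : ℕ => r ^ k * osc 0) atTop (nhds 0) := by
      simpa using (tendsto_pow_atTop_nhds_zero_of_lt_one hr0 hr1).mul_const (osc 0)
    exact h1.comp hdiv
  have hosc0 : Tendsto osc atTop (nhds 0) :=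
    tendsto_of_tendsto_of_tendsto_of_le_of_le tendsto_const_nhds htend0 hosc_nonneg hoscn
  have hMbdd : BddBelow (Set.range M) := by
    refine ⟨I 0, ?_⟩
    rintro x ⟨n, rfl⟩
    exact le_trans (hImono 0 n (Nat.zero_le n)) (hIM n)
  have hMantitone : Antitone M := fun a b h => hManti a b h
  set L : ℝ := ⨅ n, M n with hLdef
  have hML : Tendsto M atTop (nhds L) := tendsto_atTop_ciInf hMantitone hMbdd
  have hIL : Tendsto I atTop (nhds L) := by
    have h1 : Tendsto (fun n => M n - osc n) atTop (nhds (L - 0)) := hML.sub hosc0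
    simp only [sub_zero] at h1
    exact h1.congr (fun n => by simp [hoscdef])
  have hzL : Tendsto z atTop (nhds L) :=
    tendsto_of_tendsto_of_tendsto_of_le_of_le hIL hML
      (fun n => lemA' n n le_rfl) (fun n => lemA n n le_rfl)
  -- invariant
  set T : ℕ → ℝ := fun n => ∑ i ∈ range m, ((i : ℝ) + 1) * z (n + i) with hTdef
  have hTstep : ∀ n, T (n + 1) = T n := by
    intro n
    have tel : ∑ i ∈ range m,
        ((((i : ℕ) + 1 : ℕ) : ℝ) * z (n + (i + 1)) - (i : ℝ) * z (n + i))
        = (m : ℝ) * z (n + m) - ((0 : ℕ) : ℝ) * z (n + 0) :=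
      Finset.sum_range_sub (f := fun i => (i : ℝ) * z (n + i)) m
    have hS : (m : ℝ) * z (n + m) = ∑ i ∈ range m, z (n + i) := by
      rw [hz n]; field_simp
    have e1 : T (n + 1) = ∑ i ∈ range m, ((i : ℝ) * z (n + i)
        + ((((i : ℕ) + 1 : ℕ) : ℝ) * z (n + (i + 1)) - (i : ℝ) * z (n + i))) := by
      apply Finset.sum_congr rfl
      intro i _
      have : n + 1 + i = n + (i + 1) := by omega
      rw [this]; push_cast; ring
    rw [e1, Finset.sum_add_distrib, tel]
    push_cast
    have e2 : T n = ∑ i ∈ range m, (i : ℝ) * z (n + i) + ∑ i ∈ range m, z (n + i) := by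
      rw [hTdef]
      rw [← Finset.sum_add_distrib]
      exact Finset.sum_congr rfl fun i _ => by ring
    rw [e2, hS]; ring
  have hTconst : ∀ n, T n = T 0 := by
    intro n
    induction n with
    | zero => rfl
    | succ n ih => rw [hTstep n, ih]
  have hTlim : Tendsto T atTop (nhds (∑ i ∈ range m, (((i : ℝ) + 1) * L))) := by
    apply tendsto_finset_sum
    intro i _
    exact ((hzL.comp (tendsto_add_atTop_nat i)).const_mul _)
  have hTconst' : Tendsto T atTop (nhds (T 0)) :=
    (tendsto_const_nhds : Tendsto (fun _ : ℕ => T 0) atTop (nhds (T 0))).congr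
      (fun n => (hTconst n).symm)
  have hkey : ∑ i ∈ range m, (((i : ℝ) + 1) * L) = T 0 :=
    tendsto_nhds_unique hTlim hTconst'
  have hT0 : T 0 = ∑ j ∈ range m, ((j : ℝ) + 1) * z j := by
    simp [hTdef]
  have h2 : (2 / ((m : ℝ) * ((m : ℝ) + 1))) * T 0 = L := by
    rw [← hkey, ← Finset.sum_mul, sum_range_add_one_real]
    have hmm : ((m : ℝ) * ((m : ℝ) + 1)) ≠ 0 := by positivity
    field_simp
  rw [← hT0, h2]
  exact hzL

/-- Moving Kolmogorov (f-)mean with equal weights 1/m: the sequence is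
well defined and converges to f⁻¹((2/(m(m+1))) ∑ (j+1) f(y_j)). -/
theorem stmt_18 (m : ℕ) (hm : 2 ≤ m)
    (D : Set ℝ) (hD : D.Nonempty)
    (f g : ℝ → ℝ)
    (hinj : Set.InjOn f D)
    (hconv : Convex ℝ (f '' D))
    (hgf : ∀ x ∈ D, g (f x) = x)
    (hfg : ∀ y ∈ f '' D, f (g y) = y)
    (hgmaps : Set.MapsTo g (f '' D) D)
    (hgcont : ContinuousOn g (f '' D))
    (y : ℕ → ℝ)
    (hy0 : ∀ k, k < m → y k ∈ D)
    (hrec : ∀ n, m ≤ n →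
      y n = g ((1 / (m : ℝ)) * ∑ i ∈ Finset.range m, f (y (n - m + i)))) :
    (∀ n, y n ∈ D) ∧
    Tendsto y atTop
      (nhds (g ((2 / ((m : ℝ) * ((m : ℝ) + 1))) *
        ∑ j ∈ Finset.range m, ((j : ℝ) + 1) * f (y j)))) := by
  have hm0 : 0 < m := by omega
  have hmR : (0 : ℝ) < m := by exact_mod_cast hm0
  -- average of m points of f '' D lies in f '' D
  have havg : ∀ u : ℕ → ℝ, (∀ i ∈ Finset.range m, u i ∈ f '' D) →
      (1 / (m : ℝ)) * ∑ i ∈ Finset.range m, u i ∈ f '' D := by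
    intro u hu
    rw [Finset.mul_sum]
    have := hconv.sum_mem (t := Finset.range m) (w := fun _ => 1 / (m : ℝ))
      (fun i _ => by positivity)
      (by simp [Finset.sum_const, Finset.card_range]; field_simp)
      hu
    simpa [smul_eq_mul] using this
  have hmem : ∀ n, y n ∈ D := by
    intro n
    induction n using Nat.strong_induction_on with
    | _ n ih =>
      by_cases h : n < m
      · exact hy0 n h
      · push_neg at h
        rw [hrec n h]
        refine hgmaps (havg _ fun i hi => Set.mem_image_of_mem f (ih _ ?_))
        have := Finset.mem_range.1 hi; omega
  set z : ℕ → ℝ := fun n => f (y n) with hzdef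
  have hzim : ∀ n, z n ∈ f '' D := fun n => Set.mem_image_of_mem f (hmem n)
  have hz : ∀ n, z (n + m) = (1 / (m : ℝ)) * ∑ i ∈ Finset.range m, z (n + i) := by
    intro n
    have h1 := hrec (n + m) (Nat.le_add_left m n)
    have hidx : ∀ i, n + m - m + i = n + i := fun i => by omega
    simp only [hidx] at h1
    show f (y (n + m)) = _
    rw [h1, hfg _ (havg _ fun i _ => hzim (n + i))]
  have hmain := avg_rec_tendsto m hm z hz
  set c : ℝ := (2 / ((m : ℝ) * ((m : ℝ) + 1))) * ∑ j ∈ Finset.range m, ((j : ℝ) + 1) * z j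
    with hcdef
  have hc : c ∈ f '' D := by
    rw [hcdef, Finset.mul_sum]
    have := hconv.sum_mem (t := Finset.range m)
      (w := fun j => 2 / ((m : ℝ) * ((m : ℝ) + 1)) * ((j : ℝ) + 1))
      (fun i _ => by positivity)
      (by
        rw [← Finset.mul_sum, sum_range_add_one_real]
        field_simp)
      (fun i _ => hzim i)
    simpa [smul_eq_mul, mul_assoc] using this
  have hzc : Tendsto z atTop (nhdsWithin c (f '' D)) :=
    tendsto_nhdsWithin_iff.2 ⟨hmain, Eventually.of_forall hzim⟩
  have hgz : Tendsto (fun n => g (z n)) atTop (nhds (g c)) := Filter.Tendsto.comp (hgcont c hc) hzc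
  refine ⟨hmem, ?_⟩
  exact hgz.congr fun n => hgf _ (hmem n)
end

section
/- Let m ≥ 2 and y₀,...,y_{m-1} > 0. The moving geometric mean sequence defined by y_{n+m} = (y_{n+m-1} ··· y_n)^{1/m} converges to (∏_{j=0}^{m-1} y_j^{j+1})^{2/(m(m+1))}. -/
/-!
Taking logarithms turns the moving geometric mean into the moving average
`m x (n + m) = x n + ⋯ + x (n + m - 1)`. The maximum of a window of `m` consecutive terms never
increases and the minimum never decreases, and since each new term is an average in which the
window's minimum has weight `1 / m`, the limit of the maxima cannot exceed the limit of the minima: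
the sequence converges. Its limit is read off the invariant `∑ (i + 1) x (n + i)`, which does not
depend on `n`.
-/

open Filter Topology Finset

def IsMovingAverage (m : ℕ) (x : ℕ → ℝ) : Prop :=
  ∀ n, (m : ℝ) * x (n + m) = ∑ i ∈ range m, x (n + i)

lemma sum_range_cast_add_one (m : ℕ) : ∑ i ∈ range m, ((i : ℝ) + 1) = m * (m + 1) / 2 := by
  induction m with
  | zero => simp
  | succ k ih => rw [sum_range_succ, ih]; push_cast; ring

variable {m : ℕ} {x : ℕ → ℝ}

lemma IsMovingAverage.neg (h : IsMovingAverage m x) : IsMovingAverage m (-x) := fun n => by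
  simp only [Pi.neg_apply, mul_neg, sum_neg_distrib, h n]

section windowMax

variable (hm : 0 < m)

def windowMax (x : ℕ → ℝ) (n : ℕ) : ℝ :=
  (range m).sup' (nonempty_range_iff.mpr hm.ne') fun i => x (n + i)

lemma le_windowMax {n i : ℕ} (hi : i < m) : x (n + i) ≤ windowMax hm x n :=
  le_sup' (fun i => x (n + i)) (mem_range.mpr hi)

lemma exists_eq_windowMax (n : ℕ) : ∃ i < m, x (n + i) = windowMax hm x n := by
  obtain ⟨i, hi, hmax⟩ := exists_mem_eq_sup' (nonempty_range_iff.mpr hm.ne') fun i => x (n + i)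
  exact ⟨i, mem_range.mp hi, hmax.symm⟩

namespace IsMovingAverage

variable {hm} (h : IsMovingAverage m x)
include h

lemma le_windowMax_self (n : ℕ) : x (n + m) ≤ windowMax hm x n := by
  have hsum : ∑ i ∈ range m, x (n + i) ≤ m * windowMax hm x n := by
    simpa using sum_le_card_nsmul (range m) _ _ fun i hi => le_windowMax hm (mem_range.mp hi)
  rw [← h n] at hsum
  exact le_of_mul_le_mul_left hsum (by exact_mod_cast hm)

lemma windowMax_antitone : Antitone (windowMax hm x) := by
  refine antitone_nat_of_succ_le fun n => sup'_le _ _ fun i hi => ?_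
  rcases Nat.lt_or_ge (i + 1) m with hlt | hge
  · rw [add_right_comm, add_assoc]
    exact le_windowMax hm hlt
  · rw [show n + 1 + i = n + m by grind]
    exact h.le_windowMax_self n

lemma le_windowMax_zero (n : ℕ) : x n ≤ windowMax hm x 0 :=
  calc x n = x (n + 0) := rfl
    _ ≤ windowMax hm x n := le_windowMax hm hm
    _ ≤ windowMax hm x 0 := h.windowMax_antitone (Nat.zero_le n)

lemma mul_le_sub_one_mul_windowMax_add {w i₀ : ℕ} (hi₀ : i₀ < m) :
    m * x (w + m) ≤ (m - 1) * windowMax hm x w + x (w + i₀) := by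
  have hmem : i₀ ∈ range m := mem_range.mpr hi₀
  have hrest := sum_le_card_nsmul ((range m).erase i₀) (fun i => x (w + i)) (windowMax hm x w)
    fun i hi => le_windowMax hm (mem_range.mp (mem_of_mem_erase hi))
  rw [card_erase_of_mem hmem, card_range, nsmul_eq_mul, Nat.cast_pred hm] at hrest
  rw [h w, ← add_sum_erase _ _ hmem]
  linarith

lemma windowMax_add_le {c : ℝ} (hc : ∀ w, ∃ i < m, x (w + i) ≤ c) (n : ℕ) :
    m * windowMax hm x (n + m) ≤ (m - 1) * windowMax hm x n + c := by
  obtain ⟨i, hi, hmax⟩ := exists_eq_windowMax hm (x := x) (n + m)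
  obtain ⟨i₀, hi₀, hlow⟩ := hc (n + i)
  have hwindow : windowMax hm x (n + i) ≤ windowMax hm x n :=
    h.windowMax_antitone (Nat.le_add_right n i)
  have hm1 : (0 : ℝ) ≤ m - 1 := sub_nonneg.mpr (Nat.one_le_cast.mpr hm)
  rw [← hmax, add_right_comm]
  linarith [h.mul_le_sub_one_mul_windowMax_add (hm := hm) (w := n + i) hi₀,
    mul_le_mul_of_nonneg_left hwindow hm1]

lemma iInf_windowMax_le {c : ℝ} (hc : ∀ w, ∃ i < m, x (w + i) ≤ c)
    (hbdd : BddBelow (Set.range (windowMax hm x))) : ⨅ n, windowMax hm x n ≤ c := by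
  have hlim := tendsto_atTop_ciInf h.windowMax_antitone hbdd
  have hle := le_of_tendsto_of_tendsto'
    ((hlim.comp (tendsto_add_atTop_nat m)).const_mul (m : ℝ))
    ((hlim.const_mul ((m : ℝ) - 1)).add_const c) (h.windowMax_add_le hc)
  linarith

theorem tendsto_iInf_windowMax : Tendsto x atTop (𝓝 (⨅ n, windowMax hm x n)) := by
  set M := windowMax hm x
  set M' := windowMax hm (-x)
  have hxM : ∀ n, x n ≤ M n := fun n => le_windowMax hm (n := n) hm
  have hxM' : ∀ n, -M' n ≤ x n := fun n => neg_le.mp (le_windowMax hm (x := -x) (n := n) hm)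
  have hbdd : BddBelow (Set.range M) :=
    ⟨-M' 0, Set.forall_mem_range.mpr fun n =>
      (neg_le.mp (h.neg.le_windowMax_zero n)).trans (hxM n)⟩
  have hbdd' : BddBelow (Set.range M') :=
    ⟨-M 0, Set.forall_mem_range.mpr fun n =>
      (neg_le_neg (h.le_windowMax_zero n)).trans (le_windowMax hm (x := -x) (n := n) hm)⟩
  have hlim := tendsto_atTop_ciInf h.windowMax_antitone hbdd
  have hlim' := (tendsto_atTop_ciInf h.neg.windowMax_antitone hbdd').neg
  have hupper : ⨅ n, M n ≤ -⨅ n, M' n := h.iInf_windowMax_le (fun w => by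
    obtain ⟨i, hi, hmax⟩ := exists_eq_windowMax hm (x := -x) w
    exact ⟨i, hi, le_neg.mpr ((ciInf_le hbdd' w).trans_eq hmax.symm)⟩) hbdd
  have hlower : -⨅ n, M' n ≤ ⨅ n, M n :=
    le_of_tendsto_of_tendsto' hlim' hlim fun n => (hxM' n).trans (hxM n)
  exact tendsto_of_tendsto_of_tendsto_of_le_of_le
    (le_antisymm hlower hupper ▸ hlim') hlim hxM' hxM

end IsMovingAverage

end windowMax

namespace IsMovingAverage

variable (h : IsMovingAverage m x)
include h

lemma weightedSum_succ (n : ℕ) :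
    ∑ i ∈ range m, ((i : ℝ) + 1) * x (n + 1 + i) = ∑ i ∈ range m, ((i : ℝ) + 1) * x (n + i) := by
  have hshift : ∑ i ∈ range m, ((i : ℝ) + 1) * x (n + 1 + i)
      = ∑ i ∈ range (m + 1), (i : ℝ) * x (n + i) := by
    rw [sum_range_succ']
    simp only [Nat.cast_zero, zero_mul, add_zero, Nat.cast_succ, add_assoc, add_comm 1]
  rw [hshift, sum_range_succ, h n, ← sum_add_distrib]
  exact sum_congr rfl fun i _ => by ring

lemma weightedSum_eq (n : ℕ) :
    ∑ i ∈ range m, ((i : ℝ) + 1) * x (n + i) = ∑ i ∈ range m, ((i : ℝ) + 1) * x i := by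
  induction n with
  | zero => simp only [zero_add]
  | succ k ih => rw [← ih, ← h.weightedSum_succ k]

theorem tendsto (hm : 0 < m) :
    Tendsto x atTop (𝓝 (2 / (m * (m + 1)) * ∑ i ∈ range m, ((i : ℝ) + 1) * x i)) := by
  set L := ⨅ n, windowMax hm x n
  have hlim : Tendsto x atTop (𝓝 L) := h.tendsto_iInf_windowMax
  have hsum : Tendsto (fun n => ∑ i ∈ range m, ((i : ℝ) + 1) * x (n + i)) atTop
      (𝓝 (m * (m + 1) / 2 * L)) := by
    rw [← sum_range_cast_add_one, sum_mul]
    exact tendsto_finsetSum _ fun i _ => (hlim.comp (tendsto_add_atTop_nat i)).const_mul _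
  simp only [h.weightedSum_eq] at hsum
  rw [tendsto_const_nhds_iff.mp hsum]
  convert hlim using 2
  have hmR : (0 : ℝ) < m := by exact_mod_cast hm
  field_simp

end IsMovingAverage

lemma pos_of_eq_rpow_prod {y : ℕ → ℝ} (hpos : ∀ j, j < m → 0 < y j)
    (hrec : ∀ n : ℕ, y (n + m) = (∏ i ∈ range m, y (n + i)) ^ (1 / (m : ℝ))) (n : ℕ) :
    0 < y n := by
  induction n using Nat.strong_induction_on with
  | _ n ih =>
    rcases lt_or_ge n m with hn | hn
    · exact hpos n hn
    · obtain ⟨k, rfl⟩ : ∃ k, n = k + m := ⟨n - m, by omega⟩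
      rw [hrec k]
      exact Real.rpow_pos_of_pos (prod_pos fun i hi => ih _ (by have := mem_range.mp hi; omega)) _

lemma isMovingAverage_log {y : ℕ → ℝ} (hm : 0 < m) (hy : ∀ n, 0 < y n)
    (hrec : ∀ n : ℕ, y (n + m) = (∏ i ∈ range m, y (n + i)) ^ (1 / (m : ℝ))) :
    IsMovingAverage m fun n => Real.log (y n) := fun n => by
  dsimp only
  rw [hrec n, Real.log_rpow (prod_pos fun i _ => hy _), Real.log_prod fun i _ => (hy _).ne',
    ← mul_assoc, mul_one_div_cancel (by exact_mod_cast hm.ne'), one_mul]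

/-- The moving geometric mean converges to the weighted geometric mean
(∏ y_j^{j+1})^{2/(m(m+1))}. -/
theorem stmt_19 (m : ℕ) (hm : 2 ≤ m) (y : ℕ → ℝ)
    (hpos : ∀ j, j < m → 0 < y j)
    (hrec : ∀ n : ℕ, y (n + m) = (∏ i ∈ Finset.range m, y (n + i)) ^ (1 / (m : ℝ))) :
    Tendsto y atTop
      (nhds ((∏ j ∈ Finset.range m, y j ^ ((j : ℝ) + 1)) ^
        (2 / ((m : ℝ) * ((m : ℝ) + 1))))) := by
  have hm0 : 0 < m := by omega
  have hy := pos_of_eq_rpow_prod hpos hrec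
  have hlog := ((isMovingAverage_log hm0 hy hrec).tendsto hm0).rexp
  have hlimit : (∏ j ∈ range m, y j ^ ((j : ℝ) + 1)) ^ (2 / ((m : ℝ) * (m + 1)))
      = Real.exp (2 / (m * (m + 1)) * ∑ j ∈ range m, ((j : ℝ) + 1) * Real.log (y j)) := by
    rw [Real.rpow_def_of_pos (prod_pos fun j _ => Real.rpow_pos_of_pos (hy j) _),
      Real.log_prod fun j _ => (Real.rpow_pos_of_pos (hy j) _).ne', mul_comm]
    simp only [Real.log_rpow (hy _)]
  simpa only [hlimit, Real.exp_log (hy _)] using hlog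
end
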